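/- arXiv:1602.05694 — 11 statements merged into one kernel-verified Lean document; each statement's English description precedes it below -/
import Mathlib

section
/- Every idempotent semigroup (a semigroup in which x·x = x for all x) with at least 2 elements has a subsemigroup of order exactly 2. -/
lemma pair_subsemigroup {S : Type*} [Semigroup S] (a b : S) (hab : a ≠ b)
    (haa : a * a = a) (hbb : b * b = b)
    (h1 : a * b = a ∨ a * b = b) (h2 : b * a = a ∨ b * a = b) :
    ∃ T : Finset S, T.card = 2 ∧ ∀ x ∈ T, ∀ y ∈ T, x * y ∈ T := by
  classical
  refine ⟨{a, b}, ?_, ?_⟩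
  · simp [hab]
  · intro x hx y hy
    simp only [Finset.mem_insert, Finset.mem_singleton] at hx hy ⊢
    rcases hx with rfl | rfl <;> rcases hy with rfl | rfl <;>
      simp [haa, hbb, h1, h2]

/-- Every idempotent semigroup with at least 2 elements has a subsemigroup
of order exactly 2. -/
theorem stmt_0 (S : Type*) [Semigroup S] (hidem : ∀ x : S, x * x = x)
    (hcard : ∃ x y : S, x ≠ y) :
    ∃ T : Finset S, T.card = 2 ∧ ∀ x ∈ T, ∀ y ∈ T, x * y ∈ T := by
  obtain ⟨x, y, hxy⟩ := hcard
  by_cases h1 : x = x * y * x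
  · by_cases h2 : y = y * x * y
    · by_cases h3 : x = x * y
      · by_cases h4 : y = y * x
        · -- x = xy, y = yx, so {x,y} closed
          exact pair_subsemigroup x y hxy (hidem x) (hidem y)
            (Or.inl h3.symm) (Or.inr h4.symm)
        · -- {y, yx}
          refine pair_subsemigroup y (y * x) (fun h => h4 h) (hidem y) ?_ ?_ ?_
          · calc y * x * (y * x) = y * (x * y * x) := by simp only [mul_assoc]
              _ = y * x := by rw [← h1]
          · right
            calc y * (y * x) = y * y * x := (mul_assoc y y x).symm
              _ = y * x := by rw [hidem y]
          · exact Or.inl h2.symm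
      · -- {x, xy}
        refine pair_subsemigroup x (x * y) h3 (hidem x) ?_ ?_ ?_
        · calc x * y * (x * y) = x * y * x * y := by rw [mul_assoc (x*y) x y]
            _ = x * y := by rw [← h1]
        · right
          calc x * (x * y) = x * x * y := (mul_assoc x x y).symm
            _ = x * y := by rw [hidem x]
        · exact Or.inl h1.symm
    · -- {y, y*x*y}
      refine pair_subsemigroup y (y * x * y) h2 (hidem y) (hidem _) ?_ ?_
      · right
        calc y * (y * x * y) = y * y * x * y := by simp only [mul_assoc]
          _ = y * x * y := by rw [hidem y]
      · right
        calc y * x * y * y = y * x * (y * y) := mul_assoc _ y y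
          _ = y * x * y := by rw [hidem y]
  · -- {x, x*y*x}
    refine pair_subsemigroup x (x * y * x) h1 (hidem x) (hidem _) ?_ ?_
    · right
      calc x * (x * y * x) = x * (x * y) * x := by rw [← mul_assoc]
        _ = (x * x) * y * x := by rw [← mul_assoc]
        _ = x * y * x := by rw [hidem x]
    · right
      calc x * y * x * x = x * y * (x * x) := mul_assoc _ x x
        _ = x * y * x := by rw [hidem x]
end

section
/- If an idempotent semigroup S with at least 4 elements has no subsemigroup of order 4, then for all a, b in S the subsemigroup generated by {a,b} has at most 3 elements, and both aba and bab lie in the set {a, b, ab, ba}. -/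
/-- If an idempotent semigroup with at least 4 elements has no subsemigroup of
order 4, then every two-generated subsemigroup has at most 3 elements and
`aba`, `bab` lie in `{a, b, ab, ba}`. -/
theorem stmt_1 (S : Type*) [Semigroup S] (hidem : ∀ x : S, x * x = x)
    (hcard : ∃ f : Fin 4 → S, Function.Injective f)
    (hno4 : ¬ ∃ T : Finset S, T.card = 4 ∧ ∀ x ∈ T, ∀ y ∈ T, x * y ∈ T) :
    ∀ a b : S,
      (∀ f : Fin 4 → (Subsemigroup.closure {a, b} : Subsemigroup S),
        ¬ Function.Injective f) ∧
      a * b * a ∈ ({a, b, a * b, b * a} : Set S) ∧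
      b * a * b ∈ ({a, b, a * b, b * a} : Set S) := by
  classical
  intro a b
  have s1 : ∀ x y : S, x * (x * y) = x * y := fun x y => by rw [← mul_assoc, hidem]
  have s2 : ∀ x y : S, x * (y * (x * y)) = x * y := fun x y => by
    rw [← mul_assoc, hidem]
  have s3 : ∀ x y z : S, x * (y * (x * (y * z))) = x * (y * z) := fun x y z => by
    calc x * (y * (x * (y * z))) = (x * (y * (x * y))) * z := by simp only [mul_assoc]
      _ = (x * y) * z := by rw [s2]
      _ = x * (y * z) := mul_assoc ..
  -- some pair among ab, ba, aba, bab coincides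
  have hD : a*b = b*a ∨ a*b = a*b*a ∨ a*b = b*a*b ∨ b*a = a*b*a ∨ b*a = b*a*b ∨
      a*b*a = b*a*b := by
    by_contra h
    push_neg at h
    obtain ⟨h1, h2, h3, h4, h5, h6⟩ := h
    apply hno4
    refine ⟨{a*b, b*a, a*b*a, b*a*b}, ?_, ?_⟩
    · rw [Finset.card_insert_of_notMem (by simp [h1, h2, h3]),
        Finset.card_insert_of_notMem (by simp [h4, h5]),
        Finset.card_insert_of_notMem (by simp [h6]), Finset.card_singleton]
    · intro x hx y hy
      simp only [Finset.mem_insert, Finset.mem_singleton] at hx hy ⊢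
      rcases hx with rfl | rfl | rfl | rfl <;> rcases hy with rfl | rfl | rfl | rfl <;>
        simp [mul_assoc, hidem, s1, s2, s3]
  -- hence aba, bab ∈ {ab, ba}
  have haba : a*b*a = a*b ∨ a*b*a = b*a := by
    rcases hD with h | h | h | h | h | h
    · left; rw [mul_assoc, ← h, s1]
    · exact Or.inl h.symm
    · right; rw [h, mul_assoc, mul_assoc, s2]
    · exact Or.inr h.symm
    · left; rw [mul_assoc, h, mul_assoc, s2]
    · left
      have : a * (a * b * a) = a * (b * a * b) := by rw [h]
      rw [← mul_assoc, ← mul_assoc, hidem] at this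
      rw [this, mul_assoc, s2]
  have hbab : b*a*b = a*b ∨ b*a*b = b*a := by
    rcases hD with h | h | h | h | h | h
    · right; rw [mul_assoc, h, s1]
    · right; rw [mul_assoc, h, mul_assoc, s2]
    · exact Or.inl h.symm
    · left; rw [h, mul_assoc, mul_assoc, s2]
    · exact Or.inr h.symm
    · right
      have : b * (b * a * b) = b * (a * b * a) := by rw [h]
      rw [← mul_assoc, ← mul_assoc, hidem] at this
      rw [this, mul_assoc, s2]
  have h1 := haba
  have h2 := hbab
  rw [mul_assoc] at h1 h2
  -- the set {a, b, ab, ba} is closed under multiplication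
  have hcl : ∀ x ∈ ({a, b, a*b, b*a} : Set S), ∀ y ∈ ({a, b, a*b, b*a} : Set S),
      x * y ∈ ({a, b, a*b, b*a} : Set S) := by
    intro x hx y hy
    simp only [Set.mem_insert_iff, Set.mem_singleton_iff] at hx hy ⊢
    rcases h1 with h1 | h1 <;> rcases h2 with h2 | h2 <;>
      rcases hx with rfl | rfl | rfl | rfl <;> rcases hy with rfl | rfl | rfl | rfl <;>
        simp [mul_assoc, hidem, s1, s2, s3, h1, h2]
  refine ⟨?_, ?_, ?_⟩
  · -- no injective Fin 4 → closure
    intro f hf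
    set U : Finset S := {a, b, a*b, b*a} with hU
    have hmemU : ∀ x : S, x ∈ U ↔ x ∈ ({a, b, a*b, b*a} : Set S) := by
      intro x; simp [hU]
    have hsub : (Subsemigroup.closure {a, b} : Subsemigroup S) ≤
        ⟨{a, b, a*b, b*a}, fun hx hy => hcl _ hx _ hy⟩ := by
      rw [Subsemigroup.closure_le]
      intro x hx
      rcases hx with rfl | rfl
      · exact Or.inl rfl
      · exact Or.inr (Or.inl rfl)
    have hg : Function.Injective (fun i => ((f i : Subsemigroup.closure {a,b}) : S)) :=
      fun i j hij => hf (Subtype.ext hij)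
    have hgU : ∀ i : Fin 4, ((f i : Subsemigroup.closure {a,b}) : S) ∈ U := by
      intro i
      rw [hmemU]
      exact hsub (f i).2
    have him : Finset.univ.image (fun i => ((f i : Subsemigroup.closure {a,b}) : S)) ⊆ U := by
      intro x hx
      simp only [Finset.mem_image] at hx
      obtain ⟨i, _, rfl⟩ := hx
      exact hgU i
    have h4le : 4 ≤ U.card := by
      have := Finset.card_le_card him
      rwa [Finset.card_image_of_injective _ hg, Finset.card_univ, Fintype.card_fin] at this
    have hle4 : U.card ≤ 4 := by
      refine le_trans (Finset.card_insert_le _ _) (Nat.succ_le_succ ?_)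
      refine le_trans (Finset.card_insert_le _ _) (Nat.succ_le_succ ?_)
      refine le_trans (Finset.card_insert_le _ _) (Nat.succ_le_succ ?_)
      simp
    exact hno4 ⟨U, le_antisymm hle4 h4le, fun x hx y hy => by
      rw [hmemU] at hx hy ⊢; exact hcl x hx y hy⟩
  · rcases haba with h | h <;> simp [h]
  · rcases hbab with h | h <;> simp [h]
end

section
/- Every idempotent semigroup with at least 4 elements has a subsemigroup of order exactly 4. -/
/-!
In an idempotent semigroup, any two elements `x`, `y` give the subsemigroup
`{xy, yx, xyx, yxy}`; it has four elements unless `xy` and `yx` form a left- or right-zero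
pair. So we may assume that every pair does, which gives `uvu ∈ {uv, vu}` for all `u`, `v`.
Then every product of generators equals a product of distinct generators, so four distinct
elements generate a finite subsemigroup. Finally, a maximal element `m` (for the natural order
`e ≤ f ↔ ef = fe = e`) of a finite subsemigroup `T` is never a product of two other elements
of `T`, because `xy ≤ x` or `xy ≤ y`; removing maximal elements one at a time brings `T` down
to four elements.
-/

section Monoid

variable {M : Type*} [Monoid M]

theorem exists_nodup_subset_prod_eq (h : ∀ u v : M, u * v * u = u * v ∨ u * v * u = v * u) :
    ∀ l : List M, ∃ l' : List M, l'.Nodup ∧ l' ⊆ l ∧ l'.prod = l.prod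
  | [] => ⟨[], List.nodup_nil, List.Subset.refl _, rfl⟩
  | x :: t => by
    obtain ⟨t', hnd, hsub, hprod⟩ := exists_nodup_subset_prod_eq h t
    by_cases hx : x ∈ t'
    · obtain ⟨p, r, rfl⟩ := List.append_of_mem hx
      have hsub' : x :: (p ++ r) ⊆ x :: t := List.cons_subset_cons x fun z hz =>
        hsub (by simp only [List.mem_append, List.mem_cons] at hz ⊢; tauto)
      have hprod' : (x :: t).prod = x * p.prod * x * r.prod := by
        simp only [List.prod_cons, ← hprod, List.prod_append, mul_assoc]
      rcases h x p.prod with h' | h'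
      · refine ⟨x :: (p ++ r), List.nodup_middle.mp hnd, hsub', ?_⟩
        rw [hprod', h', List.prod_cons, List.prod_append, mul_assoc]
      · refine ⟨p ++ x :: r, hnd, List.Subset.trans hsub (List.subset_cons_self x t), ?_⟩
        rw [hprod', h', List.prod_append, List.prod_cons, mul_assoc]
    · exact ⟨x :: t', List.nodup_cons.2 ⟨hx, hnd⟩, List.cons_subset_cons x hsub,
        by rw [List.prod_cons, List.prod_cons, hprod]⟩

theorem Submonoid.finite_closure_of_mul_mul_self_cases
    (h : ∀ u v : M, u * v * u = u * v ∨ u * v * u = v * u) (s : Finset M) :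
    (closure (s : Set M) : Set M).Finite := by
  refine ((List.finite_toSet (s.toList.sublists.flatMap List.permutations)).image
    List.prod).subset ?_
  rw [closure_eq_image_prod]
  rintro _ ⟨l, hl, rfl⟩
  obtain ⟨l', hnd, hsub, hprod⟩ := exists_nodup_subset_prod_eq h l
  obtain ⟨l'', hperm, hsubl⟩ := hnd.subperm fun z hz => Finset.mem_toList.2 (hl z (hsub hz))
  exact ⟨l', List.mem_flatMap.2
    ⟨l'', List.mem_sublists.2 hsubl, List.mem_permutations.2 hperm.symm⟩, hprod⟩

end Monoid

section Semigroup

variable {S : Type*} [Semigroup S]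

def pairProducts (x y : S) : List S := [x * y, y * x, x * y * x, y * x * y]

theorem pairProducts_mul_mem (hidem : ∀ x : S, x * x = x) (x y : S) :
    ∀ u ∈ pairProducts x y, ∀ v ∈ pairProducts x y, u * v ∈ pairProducts x y := by
  have absorb : ∀ u w : S, u * (u * w) = u * w := fun u w => by rw [← mul_assoc, hidem]
  have absorb₂ : ∀ u w : S, u * (w * (u * w)) = u * w := fun u w => by
    rw [← mul_assoc, hidem]
  simp only [pairProducts, List.mem_cons, List.not_mem_nil, or_false]
  rintro u (rfl | rfl | rfl | rfl) v (rfl | rfl | rfl | rfl) <;>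
    simp [mul_assoc, hidem, absorb, absorb₂]

theorem mul_left_or_right_zero_of_not_nodup {p q : S} (hp : p * p = p)
    (hpqp : p * q * p = p) (hqpq : q * p * q = q) (h : ¬ [p, q, p * q, q * p].Nodup) :
    (p * q = p ∧ q * p = q) ∨ (p * q = q ∧ q * p = p) := by
  have right_of_eq : p = q * p → p * q = q ∧ q * p = p := fun h =>
    ⟨by rw [h]; exact hqpq, h.symm⟩
  simp only [List.nodup_cons, List.mem_cons, List.not_mem_nil, or_false, List.nodup_nil,
    not_false_eq_true, and_true, not_and_or, not_not] at h
  rcases h with (rfl | h | h) | (h | h) | h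
  · exact Or.inl ⟨hp, hp⟩
  · refine Or.inl ⟨h.symm, ?_⟩
    calc q * p = q * (p * q) := by rw [← h]
      _ = q := by rw [← mul_assoc, hqpq]
  · exact Or.inr (right_of_eq h)
  · exact Or.inr ⟨h.symm, by rw [h]; exact hpqp⟩
  · refine Or.inl ⟨?_, h.symm⟩
    calc p * q = p * (q * p) := by rw [← h]
      _ = p := by rw [← mul_assoc, hpqp]
  · refine Or.inr (right_of_eq ?_)
    calc p = p * q * p := hpqp.symm
      _ = q * p := by rw [h, mul_assoc, hp]

theorem pairProducts_cases (hidem : ∀ x : S, x * x = x) {x y : S}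
    (h : ¬ (pairProducts x y).Nodup) :
    (x * y * x = x * y ∧ y * x * y = y * x) ∨ (x * y * x = y * x ∧ y * x * y = x * y) := by
  have absorb : ∀ a b c : S, a * b * (b * c) = a * b * c := fun a b c => by
    rw [← mul_assoc, mul_assoc a, hidem]
  have hpqp : x * y * (y * x) * (x * y) = x * y := by
    rw [absorb, absorb, mul_assoc (x * y), hidem]
  have hqpq : y * x * (x * y) * (y * x) = y * x := by
    rw [absorb, absorb, mul_assoc (y * x), hidem]
  unfold pairProducts at h
  rw [← absorb x y x, ← absorb y x y] at h ⊢
  exact mul_left_or_right_zero_of_not_nodup (hidem _) hpqp hqpq h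

theorem WithOne.mul_mul_self_cases (hidem : ∀ x : S, x * x = x)
    (h : ∀ u v : S, u * v * u = u * v ∨ u * v * u = v * u) (u v : WithOne S) :
    u * v * u = u * v ∨ u * v * u = v * u := by
  induction u with
  | one => simp
  | coe u =>
    induction v with
    | one => simp only [mul_one, ← WithOne.coe_mul, hidem, true_or]
    | coe v => simpa only [← WithOne.coe_mul, WithOne.coe_inj] using h u v

theorem exists_mul_closed_finset_superset (hidem : ∀ x : S, x * x = x)
    (h : ∀ u v : S, u * v * u = u * v ∨ u * v * u = v * u) (s : Finset S) :
    ∃ T : Finset S, s ⊆ T ∧ ∀ x ∈ T, ∀ y ∈ T, x * y ∈ T := by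
  classical
  let C := Submonoid.closure ((s.image (↑) : Finset (WithOne S)) : Set (WithOne S))
  have hfin : ((↑) ⁻¹' (C : Set (WithOne S)) : Set S).Finite :=
    (Submonoid.finite_closure_of_mul_mul_self_cases (WithOne.mul_mul_self_cases hidem h)
      _).preimage WithOne.coe_injective.injOn
  refine ⟨hfin.toFinset, fun x hx => ?_, fun x hx y hy => ?_⟩
  · rw [Set.Finite.mem_toFinset, Set.mem_preimage]
    exact Submonoid.subset_closure (Finset.mem_image_of_mem _ hx)
  · simp only [Set.Finite.mem_toFinset, Set.mem_preimage, WithOne.coe_mul] at hx hy ⊢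
    exact C.mul_mem hx hy

abbrev natPartialOrder (hidem : ∀ x : S, x * x = x) : PartialOrder S where
  le e f := e * f = e ∧ f * e = e
  le_refl e := ⟨hidem e, hidem e⟩
  le_trans e f g := by
    rintro ⟨hef, hfe⟩ ⟨hfg, hgf⟩
    exact ⟨by rw [← hef, mul_assoc, hfg], by rw [← hfe, ← mul_assoc, hgf]⟩
  le_antisymm e f := by
    rintro ⟨hef, -⟩ ⟨-, hef'⟩
    rw [← hef, hef']

theorem mul_closed_erase_of_maximal [DecidableEq S] (hidem : ∀ x : S, x * x = x)
    (h : ∀ x y : S, x * y * x = x * y ∨ y * x * y = x * y) {T : Finset S}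
    (hT : ∀ x ∈ T, ∀ y ∈ T, x * y ∈ T) {m : S}
    (hm : ∀ x ∈ T, m * x = m → x * m = m → x = m) :
    ∀ x ∈ T.erase m, ∀ y ∈ T.erase m, x * y ∈ T.erase m := by
  intro x hx y hy
  have hxT := Finset.mem_of_mem_erase hx
  have hyT := Finset.mem_of_mem_erase hy
  refine Finset.mem_erase.2 ⟨fun hxy => ?_, hT x hxT y hyT⟩
  rcases h x y with h | h
  · exact Finset.ne_of_mem_erase hx <|
      hm x hxT (by rw [← hxy, h]) (by rw [← hxy, ← mul_assoc, hidem])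
  · exact Finset.ne_of_mem_erase hy <|
      hm y hyT (by rw [← hxy, mul_assoc, hidem]) (by rw [← hxy, ← mul_assoc, h])

theorem exists_mul_closed_subset_card_eq (hidem : ∀ x : S, x * x = x)
    (h : ∀ x y : S, x * y * x = x * y ∨ y * x * y = x * y) {T : Finset S}
    (hT : ∀ x ∈ T, ∀ y ∈ T, x * y ∈ T) {n : ℕ} (hn : n ≤ T.card) :
    ∃ T' ⊆ T, T'.card = n ∧ ∀ x ∈ T', ∀ y ∈ T', x * y ∈ T' := by
  classical
  obtain ⟨k, hk⟩ := Nat.exists_eq_add_of_le hn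
  clear hn
  induction k generalizing T with
  | zero => exact ⟨T, subset_rfl, hk, hT⟩
  | succ k ih =>
    let := natPartialOrder hidem
    obtain ⟨m, hmT, hmax⟩ := T.exists_maximal (Finset.card_pos.1 (by omega))
    have hT' := mul_closed_erase_of_maximal hidem h hT fun x hx hmx hxm =>
      le_antisymm (hmax hx ⟨hmx, hxm⟩) ⟨hmx, hxm⟩
    obtain ⟨T', hsub, hcard, hT'⟩ := ih hT' (by rw [Finset.card_erase_of_mem hmT]; omega)
    exact ⟨T', hsub.trans (T.erase_subset m), hcard, hT'⟩

end Semigroup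

/-- Every idempotent semigroup with at least 4 elements has a subsemigroup
of order exactly 4. -/
theorem stmt_2 (S : Type*) [Semigroup S] (hidem : ∀ x : S, x * x = x)
    (hcard : ∃ f : Fin 4 → S, Function.Injective f) :
    ∃ T : Finset S, T.card = 4 ∧ ∀ x ∈ T, ∀ y ∈ T, x * y ∈ T := by
  classical
  by_cases hfour : ∃ x y : S, (pairProducts x y).Nodup
  · obtain ⟨x, y, hxy⟩ := hfour
    exact ⟨_, List.toFinset_card_of_nodup hxy, by simpa using pairProducts_mul_mem hidem x y⟩
  simp only [not_exists] at hfour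
  have hcases (x y : S) := pairProducts_cases hidem (hfour x y)
  obtain ⟨f, hf⟩ := hcard
  obtain ⟨T, hsub, hT⟩ := exists_mul_closed_finset_superset hidem
    (fun u v => (hcases u v).imp And.left And.left) (Finset.univ.map ⟨f, hf⟩)
  obtain ⟨T', -, hcard', hT'⟩ := exists_mul_closed_subset_card_eq hidem
    (fun x y => (hcases x y).imp And.left And.right) hT (n := 4)
    (by simpa using Finset.card_le_card hsub)
  exact ⟨T', hcard', hT'⟩
end

section
/- Suppose an idempotent semigroup S with at least 6 elements has no subsemigroup of order 6. If M is a subsemigroup of S of order 4, then there exists x in S \ M such that the subsemigroup generated by M ∪ {x} has at least 6 elements. -/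
theorem aux_inj {S : Type*} [Mul S] (c : Subsemigroup S) (T : Finset S) (h6 : T.card = 6)
    (hT : ∀ t ∈ T, t ∈ c) : ∃ f : Fin 6 → c, Function.Injective f := by
  obtain ⟨e⟩ : Nonempty (Fin 6 ≃ T) := by
    rw [← h6]; exact ⟨T.equivFin.symm⟩
  refine ⟨fun i => ⟨(e i : S), hT _ (e i).2⟩, ?_⟩
  intro i j hij
  simp only [Subtype.mk.injEq] at hij
  exact e.injective (Subtype.ext hij)

/-- If an idempotent semigroup with at least 6 elements has no subsemigroup of
order 6 and `M` is a subsemigroup of order 4, then there is `x ∉ M` with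
`⟨M ∪ {x}⟩` having at least 6 elements. -/
theorem stmt_3 (S : Type*) [Semigroup S] (hidem : ∀ x : S, x * x = x)
    (hcard : ∃ f : Fin 6 → S, Function.Injective f)
    (hno6 : ¬ ∃ T : Finset S, T.card = 6 ∧ ∀ x ∈ T, ∀ y ∈ T, x * y ∈ T)
    (M : Finset S) (hM4 : M.card = 4) (hMclosed : ∀ x ∈ M, ∀ y ∈ M, x * y ∈ M) :
    ∃ x : S, x ∉ M ∧
      ∃ f : Fin 6 → (Subsemigroup.closure (↑M ∪ {x}) : Subsemigroup S),
        Function.Injective f := by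
  classical
  by_contra hgoal
  push_neg at hgoal
  -- Step 1: for every x ∉ M, the set insert x M is closed under multiplication.
  have hA : ∀ x, x ∉ M → ∀ a ∈ insert x M, ∀ b ∈ insert x M, a * b ∈ insert x M := by
    intro x hx a ha b hb
    by_contra hab
    have hmemc : ∀ t ∈ insert x M, t ∈ Subsemigroup.closure ((↑M : Set S) ∪ {x}) := by
      intro t ht
      rcases Finset.mem_insert.mp ht with rfl | htM
      · exact Subsemigroup.subset_closure (Or.inr rfl)
      · exact Subsemigroup.subset_closure (Or.inl htM)
    have h6 : (insert (a * b) (insert x M)).card = 6 := by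
      rw [Finset.card_insert_of_notMem hab, Finset.card_insert_of_notMem hx, hM4]
    have hT : ∀ t ∈ insert (a * b) (insert x M),
        t ∈ Subsemigroup.closure ((↑M : Set S) ∪ {x}) := by
      intro t ht
      rcases Finset.mem_insert.mp ht with rfl | ht'
      · exact Subsemigroup.mul_mem _ (hmemc a ha) (hmemc b hb)
      · exact hmemc t ht'
    obtain ⟨f, hf⟩ := aux_inj _ _ h6 hT
    exact hgoal x hx f hf
  -- Step 2: a 6-element closed set from two suitable elements gives a contradiction.
  have key : ∀ u v : S, u ∉ M → v ∉ M → u ≠ v →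
      u * v ∈ insert u (insert v M) → v * u ∈ insert u (insert v M) → False := by
    intro u v hu hv huv h1 h2
    apply hno6
    refine ⟨insert u (insert v M), ?_, ?_⟩
    · rw [Finset.card_insert_of_notMem (by simp [huv, hu]),
        Finset.card_insert_of_notMem hv, hM4]
    · have sub1 : insert u M ⊆ insert u (insert v M) :=
        Finset.insert_subset_insert _ (Finset.subset_insert _ _)
      have sub2 : insert v M ⊆ insert u (insert v M) := Finset.subset_insert _ _
      intro a ha b hb
      rcases Finset.mem_insert.mp ha with rfl | ha'
      · rcases Finset.mem_insert.mp hb with rfl | hb'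
        · rw [hidem]; exact Finset.mem_insert_self _ _
        · rcases Finset.mem_insert.mp hb' with rfl | hbM
          · exact h1
          · exact sub1 (hA a hu a (Finset.mem_insert_self _ _) b
              (Finset.mem_insert_of_mem hbM))
      · rcases Finset.mem_insert.mp hb with rfl | hb'
        · rcases Finset.mem_insert.mp ha' with rfl | haM
          · exact h2
          · exact sub1 (hA b hu a (Finset.mem_insert_of_mem haM) b
              (Finset.mem_insert_self _ _))
        · exact sub2 (hA v hv a ha' b hb')
  -- Step 3: reduce the "product escapes" case to `key` using idempotency.
  have keyC : ∀ p q : S, p ∉ M → q ∉ M → p * q ∉ insert p M → False := by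
    intro p q hp hq hpq
    set z := p * q with hz
    have hzM : z ∉ M := fun h => hpq (Finset.mem_insert_of_mem h)
    have hzp : z ≠ p := fun h => hpq (h ▸ Finset.mem_insert_self _ _)
    have hpz : p * z = z := by rw [hz, ← mul_assoc, hidem]
    by_cases hw : z * p ∈ insert p M
    · exact key z p hzM hp hzp (Finset.mem_insert_of_mem hw)
        (by rw [hpz]; exact Finset.mem_insert_self _ _)
    · set w := z * p with hwdef
      have hwM : w ∉ M := fun h => hw (Finset.mem_insert_of_mem h)
      have hwp : w ≠ p := fun h => hw (h ▸ Finset.mem_insert_self _ _)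
      have h1 : w * p = w := by rw [hwdef, mul_assoc, hidem]
      have h2 : p * w = w := by rw [hwdef, ← mul_assoc, hpz]
      exact key w p hwM hp hwp (by rw [h1]; exact Finset.mem_insert_self _ _)
        (by rw [h2]; exact Finset.mem_insert_self _ _)
  -- Step 4: find two distinct elements outside M.
  obtain ⟨f, hf⟩ := hcard
  have hI : (Finset.image f Finset.univ).card = 6 := by
    rw [Finset.card_image_of_injective _ hf, Finset.card_univ, Fintype.card_fin]
  have h2 : 1 < ((Finset.image f Finset.univ) \ M).card := by
    have h := Finset.le_card_sdiff M (Finset.image f Finset.univ)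
    omega
  obtain ⟨x, hx, y, hy, hxy⟩ := Finset.one_lt_card.mp h2
  have hxM : x ∉ M := (Finset.mem_sdiff.mp hx).2
  have hyM : y ∉ M := (Finset.mem_sdiff.mp hy).2
  by_cases hxy1 : x * y ∈ insert x M
  · by_cases hxy2 : y * x ∈ insert y M
    · exact key x y hxM hyM hxy
        (Finset.insert_subset_insert x (Finset.subset_insert y M) hxy1)
        (Finset.mem_insert_of_mem hxy2)
    · exact keyC y x hyM hxM hxy2
  · exact keyC x y hxM hyM hxy1
end

section
/- If a, b, c are three distinct elements of an idempotent semigroup S and the subsemigroup generated by {a,b,c} has at most 5 elements, then abc ∈ {a, b, c, ab, ac, bc}. -/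
set_option maxRecDepth 8000 in
set_option maxHeartbeats 1600000 in
/-- If `a, b, c` are distinct elements of an idempotent semigroup and the
subsemigroup generated by `{a,b,c}` has at most 5 elements, then
`abc ∈ {a, b, c, ab, ac, bc}`. -/
theorem stmt_4 (S : Type*) [Semigroup S] (hidem : ∀ x : S, x * x = x)
    (a b c : S) (hab : a ≠ b) (hac : a ≠ c) (hbc : b ≠ c)
    (hsmall : ∀ f : Fin 6 → (Subsemigroup.closure {a, b, c} : Subsemigroup S),
      ¬ Function.Injective f) :
    a * b * c ∈ ({a, b, c, a * b, a * c, b * c} : Set S) := by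
  by_contra h
  simp only [Set.mem_insert_iff, Set.mem_singleton_iff, not_or] at h
  obtain ⟨h1, h2, h3, h4, h5, h6⟩ := h
  have e1 : a * b ≠ a := fun e => h5 (by rw [show a * b * c = a * c from by rw [e]])
  have e2 : a * b ≠ b := fun e => h6 (by rw [show a * b * c = b * c from by rw [e]])
  have e3 : a * b ≠ c := fun e => h3 (by rw [e, hidem])
  have e4 : a * b ≠ a * b * c := fun e => h4 e.symm
  have e5 : b * c ≠ a := fun e => h1 (by rw [mul_assoc, e, hidem])
  have e6 : b * c ≠ b := fun e => h4 (by rw [mul_assoc, e])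
  have e7 : b * c ≠ c := fun e => h5 (by rw [mul_assoc, e])
  have e8 : b * c ≠ a * b * c := fun e => h6 e.symm
  have e9 : a * b ≠ b * c := fun e => h6 (by rw [show a * b * c = b * c * c from by rw [e],
    mul_assoc, hidem])
  have ha : a ∈ Subsemigroup.closure ({a, b, c} : Set S) :=
    Subsemigroup.subset_closure (by simp)
  have hb : b ∈ Subsemigroup.closure ({a, b, c} : Set S) :=
    Subsemigroup.subset_closure (by simp)
  have hc : c ∈ Subsemigroup.closure ({a, b, c} : Set S) :=
    Subsemigroup.subset_closure (by simp)
  refine hsmall ![⟨a, ha⟩, ⟨b, hb⟩, ⟨c, hc⟩, ⟨a * b, mul_mem ha hb⟩,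
    ⟨b * c, mul_mem hb hc⟩, ⟨a * b * c, mul_mem (mul_mem ha hb) hc⟩] ?_
  intro i j hij
  rw [Subtype.ext_iff] at hij
  fin_cases i <;> fin_cases j <;>
    simp only [Matrix.cons_val_zero', Matrix.cons_val_succ'] at hij <;>
    first
      | rfl
      | exact absurd hij ‹_›
      | exact absurd hij.symm ‹_›
end

section
/- Let a and b be distinct elements of an idempotent semigroup S such that the subsemigroup generated by {a,b} has exactly 4 elements. Then ⟨a,b⟩ = {a, b, ab, ba}, and exactly one of the following holds: (1) aba = a and bab = b; (2) aba = ab and bab = ba; (3) aba = ba and bab = ab. -/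
/-- If `a ≠ b` in an idempotent semigroup and `⟨a,b⟩` has exactly 4 elements,
then `⟨a,b⟩ = {a, b, ab, ba}` and exactly one of the three cases
(1) `aba = a ∧ bab = b`, (2) `aba = ab ∧ bab = ba`, (3) `aba = ba ∧ bab = ab`
holds. -/
theorem stmt_5 (S : Type*) [Semigroup S] (hidem : ∀ x : S, x * x = x)
    (a b : S) (hab : a ≠ b)
    (h4 : Nat.card (Subsemigroup.closure {a, b} : Subsemigroup S) = 4) :
    (Subsemigroup.closure {a, b} : Set S) = {a, b, a * b, b * a} ∧
    (((a * b * a = a ∧ b * a * b = b) ∧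
        ¬(a * b * a = a * b ∧ b * a * b = b * a) ∧
        ¬(a * b * a = b * a ∧ b * a * b = a * b)) ∨
      (¬(a * b * a = a ∧ b * a * b = b) ∧
        (a * b * a = a * b ∧ b * a * b = b * a) ∧
        ¬(a * b * a = b * a ∧ b * a * b = a * b)) ∨
      (¬(a * b * a = a ∧ b * a * b = b) ∧
        ¬(a * b * a = a * b ∧ b * a * b = b * a) ∧
        (a * b * a = b * a ∧ b * a * b = a * b))) := by
  have hsq : ∀ x y : S, x * (x * y) = x * y := fun x y => by rw [← mul_assoc, hidem]
  have W : ∀ x y : S, x * (y * (x * y)) = x * y := fun x y => by rw [← mul_assoc, hidem]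
  have W' : ∀ x y z : S, x * (y * (x * (y * z))) = x * (y * z) := fun x y z => by
    rw [← mul_assoc, ← mul_assoc, ← mul_assoc, mul_assoc (x*y) x y, hidem, mul_assoc]
  set C : Set S := (Subsemigroup.closure {a, b} : Set S) with hCdef
  have haC : a ∈ C := Subsemigroup.subset_closure (by simp)
  have hbC : b ∈ C := Subsemigroup.subset_closure (by simp)
  have habC : a * b ∈ C := mul_mem haC hbC
  have hbaC : b * a ∈ C := mul_mem hbC haC
  have habaC : a * b * a ∈ C := mul_mem habC haC
  have hbabC : b * a * b ∈ C := mul_mem hbaC hbC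
  have hC4 : C.ncard = 4 := by
    rw [← Nat.card_coe_set_eq]; exact h4
  have hfin : C.Finite := by
    rcases C.finite_or_infinite with h|h
    · exact h
    · rw [h.ncard] at hC4; omega
  -- closure contained in the 6-element set
  have hsub : C ⊆ ({a, b, a*b, b*a, a*b*a, b*a*b} : Set S) := by
    have hT : Subsemigroup.closure {a, b} ≤
        (⟨{a, b, a*b, b*a, a*b*a, b*a*b}, by
          rintro x y hx hy
          simp only [Set.mem_insert_iff, Set.mem_singleton_iff] at hx hy ⊢
          rcases hx with rfl|rfl|rfl|rfl|rfl|rfl <;> rcases hy with rfl|rfl|rfl|rfl|rfl|rfl <;>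
            simp [mul_assoc, hsq, W, W', hidem]⟩ : Subsemigroup S) := by
      rw [Subsemigroup.closure_le]
      intro y hy
      simp only [Set.mem_insert_iff, Set.mem_singleton_iff] at hy
      rcases hy with rfl|rfl <;> simp [Subsemigroup.mem_mk]
    exact fun x hx => hT hx
  -- rule out small cases
  have hsmall : ∀ u v w : S, C ⊆ {u, v, w} → False := by
    intro u v w h
    have h1 : C.ncard ≤ ({u,v,w} : Set S).ncard :=
      Set.ncard_le_ncard h (Set.toFinite _)
    have h2 : ({u,v,w} : Set S).ncard ≤ 3 := by
      apply le_trans (Set.ncard_insert_le _ _)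
      have := Set.ncard_insert_le v ({w} : Set S)
      simp at this ⊢
      omega
    omega
  have hab_a : a * b ≠ a := by
    intro h
    refine hsmall a b (b*a) fun x hx => ?_
    have := hsub hx
    simp only [Set.mem_insert_iff, Set.mem_singleton_iff] at this ⊢
    rcases this with rfl|rfl|rfl|rfl|rfl|rfl <;> simp [h, hidem, mul_assoc, hsq, W, W']
  have hab_b : a * b ≠ b := by
    intro h
    refine hsmall a b (b*a) fun x hx => ?_
    have := hsub hx
    simp only [Set.mem_insert_iff, Set.mem_singleton_iff] at this ⊢
    rcases this with rfl|rfl|rfl|rfl|rfl|rfl <;> simp [h, hidem, mul_assoc, hsq, W, W']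
  have hba_a : b * a ≠ a := by
    intro h
    refine hsmall a b (a*b) fun x hx => ?_
    have := hsub hx
    simp only [Set.mem_insert_iff, Set.mem_singleton_iff] at this ⊢
    rcases this with rfl|rfl|rfl|rfl|rfl|rfl <;> simp [h, hidem, mul_assoc, hsq, W, W']
  have hba_b : b * a ≠ b := by
    intro h
    refine hsmall a b (a*b) fun x hx => ?_
    have := hsub hx
    simp only [Set.mem_insert_iff, Set.mem_singleton_iff] at this ⊢
    rcases this with rfl|rfl|rfl|rfl|rfl|rfl <;> simp [h, hidem, mul_assoc, hsq, W, W']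
  have habba : a * b ≠ b * a := by
    intro h
    refine hsmall a b (a*b) fun x hx => ?_
    have := hsub hx
    simp only [Set.mem_insert_iff, Set.mem_singleton_iff] at this ⊢
    rcases this with rfl|rfl|rfl|rfl|rfl|rfl <;> simp [← h, hidem, mul_assoc, hsq, W, W']
  -- the 4-element set has ncard 4
  have hn4 : ({a, b, a*b, b*a} : Set S).ncard = 4 := by
    rw [Set.ncard_insert_of_notMem
        (by simp only [Set.mem_insert_iff, Set.mem_singleton_iff]; push_neg
            exact ⟨hab, hab_a.symm, hba_a.symm⟩),
        Set.ncard_insert_of_notMem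
        (by simp only [Set.mem_insert_iff, Set.mem_singleton_iff]; push_neg
            exact ⟨hab_b.symm, hba_b.symm⟩),
        Set.ncard_insert_of_notMem (by simpa using habba), Set.ncard_singleton]
  have hEq : C = ({a, b, a*b, b*a} : Set S) := by
    refine (Set.eq_of_subset_of_ncard_le ?_ ?_ hfin).symm
    · intro x hx
      simp only [Set.mem_insert_iff, Set.mem_singleton_iff] at hx
      rcases hx with rfl|rfl|rfl|rfl <;> assumption
    · rw [hC4, hn4]
  -- aba ∈ {a, ab, ba}
  have haba : a*b*a = a ∨ a*b*a = a*b ∨ a*b*a = b*a := by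
    have := hEq ▸ habaC
    simp only [Set.mem_insert_iff, Set.mem_singleton_iff] at this
    rcases this with h|h|h|h
    · exact Or.inl h
    · exfalso
      apply hab_b
      calc a*b = a*(a*b*a) := by rw [h]
        _ = a*b*a := by rw [← mul_assoc, ← mul_assoc, hidem]
        _ = b := h
    · exact Or.inr (Or.inl h)
    · exact Or.inr (Or.inr h)
  refine ⟨hEq, ?_⟩
  rcases haba with h1|h1|h1
  · -- aba = a, need bab = b
    have hbab : b*a*b = b ∨ b*a*b = a*b ∨ b*a*b = b*a := by
      have := hEq ▸ hbabC
      simp only [Set.mem_insert_iff, Set.mem_singleton_iff] at this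
      rcases this with h|h|h|h
      · exfalso
        apply hba_a
        calc b*a = b*(b*a*b) := by rw [h]
          _ = b*a*b := by rw [← mul_assoc, ← mul_assoc, hidem]
          _ = a := h
      · exact Or.inl h
      · exact Or.inr (Or.inl h)
      · exact Or.inr (Or.inr h)
    have h2 : b*a*b = b := by
      rcases hbab with h2|h2|h2
      · exact h2
      · exfalso; apply hba_a
        calc b*a = b*a*(b*a) := (hidem _).symm
          _ = b*a*b*a := by rw [mul_assoc (b*a) b a, ← mul_assoc]
          _ = a*b*a := by rw [h2]
          _ = a := h1
      · exfalso; apply hab_a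
        calc a*b = a*b*(a*b) := (hidem _).symm
          _ = a*(b*a*b) := by rw [mul_assoc a b (a*b), mul_assoc b a b]
          _ = a*(b*a) := by rw [h2]
          _ = a*b*a := (mul_assoc a b a).symm
          _ = a := h1
    exact Or.inl ⟨⟨h1, h2⟩, fun h => hab_a (h.1.symm.trans h1),
      fun h => hba_a (h.1.symm.trans h1)⟩
  · -- aba = ab, then bab = ba
    have h2 : b*a*b = b*a := by
      calc b*a*b = b*(a*b) := mul_assoc b a b
        _ = b*(a*b*a) := by rw [h1]
        _ = b*(a*(b*a)) := by rw [mul_assoc]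
        _ = b*a := W a (b*a) ▸ W b a
    exact Or.inr (Or.inl ⟨fun h => hab_a (h1.symm.trans h.1), ⟨h1, h2⟩,
      fun h => habba (h1.symm.trans h.1)⟩)
  · -- aba = ba, then bab = ab
    have h2 : b*a*b = a*b := by
      have h3 : a*b*a*b = b*a*b := by rw [h1]
      rw [mul_assoc (a*b) a b, hidem] at h3
      exact h3.symm
    exact Or.inr (Or.inr ⟨fun h => hba_a (h1.symm.trans h.1),
      fun h => habba (h1.symm.trans h.1).symm, ⟨h1, h2⟩⟩)
end

section
/- Every idempotent semigroup with at least 6 elements has a subsemigroup of order exactly 6. -/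
/-!
A band is a semilattice of rectangular bands, its `J`-classes (`a` and `b` are `J`-equivalent when
`a * b * a = a` and `b * a * b = b`). Through `w ↦ (w * u, u * w)` the class of `u` is a rectangle
`I × J`, and every sub-rectangle `I' × J'` is a subsemigroup; so a class with at least six elements
contains a subsemigroup of order `6`. Otherwise the subsemigroup generated by six distinct elements
is finite, since two of its elements lying below the same generators are `J`-equivalent.

In a finite subsemigroup `W`, removing a maximal class `Δ` leaves an ideal `W'`: either `W'` is
large enough, or `W'` together with a sub-rectangle of `Δ` of size `6 - |W'|` works. This fails only
when `Δ` is a `2 × 2` square over a three-element ideal, and `Δ` is then the top class of `W`. If a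
maximal element `v` of `W'` is alone in its class, removing `v` leaves a subsemigroup; otherwise its
class `C` is a left- or right-zero semigroup on which `Δ` acts, and a two-element set `V ⊆ C` stable
under that action gives the subsemigroup `Δ ∪ V`.
-/

open Finset Pointwise

theorem exists_mul_eq_of_le_mul {a b k : ℕ} (hk : k ≤ a * b)
    (hk' : k = 1 ∨ k = 2 ∨ k = 4 ∨ k = 6) : ∃ a' ≤ a, ∃ b' ≤ b, a' * b' = k := by
  obtain ha | ha := le_or_gt k a
  · exact ⟨k, ha, 1, Nat.pos_of_ne_zero (by rintro rfl; omega), mul_one k⟩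
  obtain hb | hb := le_or_gt k b
  · exact ⟨1, Nat.pos_of_ne_zero (by rintro rfl; omega), k, hb, one_mul k⟩
  rcases hk' with rfl | rfl | rfl | rfl <;> interval_cases a <;> interval_cases b <;> revert hk <;>
    decide

theorem exists_invariant_pair {ι α : Type*} [DecidableEq α] (f : ι → α → α)
    (I : Finset ι) (K : Finset α) (hK : 2 ≤ K.card) (hmaps : ∀ i ∈ I, ∀ v ∈ K, f i v ∈ K)
    (hcomp : ∀ i ∈ I, ∀ j ∈ I, ∃ k ∈ I, ∀ v, f i (f j v) = f k v)
    (hidem : ∀ i ∈ I, ∀ v, f i (f i v) = f i v)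
    (horbit : ∀ i ∈ I, ∀ v ∈ K, (I.image fun j => f j (f i v)).card ≤ 2) :
    ∃ V ⊆ K, V.card = 2 ∧ ∀ i ∈ I, ∀ v ∈ V, f i v ∈ V := by
  -- Either the orbit of some image point has two elements, or every image point is fixed.
  by_cases hbig : ∃ i ∈ I, ∃ v ∈ K, (I.image fun j => f j (f i v)).card = 2
  · obtain ⟨i, hi, v, hv, h2⟩ := hbig
    refine ⟨I.image fun j => f j (f i v), ?_, h2, ?_⟩
    · simp only [image_subset_iff]
      exact fun j hj => hmaps j hj _ (hmaps i hi v hv)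
    · simp only [mem_image, forall_exists_index, and_imp]
      rintro k hk _ j hj rfl
      obtain ⟨l, hl, hkj⟩ := hcomp k hk j hj
      exact ⟨l, hl, (hkj _).symm⟩
  push Not at hbig
  have hfix : ∀ i ∈ I, ∀ v ∈ K, ∀ j ∈ I, f j (f i v) = f i v := by
    intro i hi v hv j hj
    have hle : (I.image fun j => f j (f i v)).card ≤ 1 := by
      have := horbit i hi v hv
      have := hbig i hi v hv
      omega
    exact card_le_one.1 hle _ (mem_image_of_mem _ hj) _ (by simpa using ⟨i, hi, hidem i hi v⟩)
  set P := (I ×ˢ K).image fun p => f p.1 p.2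
  have hPK : P ⊆ K := by
    simp only [P, image_subset_iff, mem_product, and_imp, Prod.forall]
    exact fun i v hi hv => hmaps i hi v hv
  obtain ⟨V, hV, hV2⟩ : ∃ V, (V ⊆ P ∨ P ⊆ V) ∧ V ⊆ K ∧ V.card = 2 := by
    obtain hP | hP := le_or_gt 2 P.card
    · obtain ⟨V, hVP, hV2⟩ := exists_subset_card_eq hP
      exact ⟨V, .inl hVP, hVP.trans hPK, hV2⟩
    · obtain ⟨V, hPV, hVK, hV2⟩ := exists_subsuperset_card_eq hPK hP.le hK
      exact ⟨V, .inr hPV, hVK, hV2⟩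
  refine ⟨V, hV2.1, hV2.2, fun i hi v hv => ?_⟩
  rcases hV with hVP | hPV
  · obtain ⟨⟨j, w⟩, hjw, rfl⟩ := mem_image.1 (hVP hv)
    rw [mem_product] at hjw
    rwa [hfix j hjw.1 w hjw.2 i hi]
  · exact hPV (mem_image_of_mem (fun p => f p.1 p.2) (a := (i, v)) (mem_product.2 ⟨hi, hV2.1 hv⟩))

class IsBand (S : Type*) [Semigroup S] : Prop where
  mul_self : ∀ x : S, x * x = x

namespace IsBand

variable {S : Type*} [Semigroup S]

/-- The natural preorder of a band (`a ∈ S b S`); the classes of `AntisymmRel JLe` are its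
`J`-classes. -/
def JLe (a b : S) : Prop := a * b * a = a

def MulClosed (T : Finset S) : Prop := ∀ x ∈ T, ∀ y ∈ T, x * y ∈ T

theorem MulClosed.union {T U : Finset S} [DecidableEq S] (hT : MulClosed T) (hU : MulClosed U)
    (hTU : ∀ x ∈ T, ∀ y ∈ U, x * y ∈ U ∧ y * x ∈ U) : MulClosed (T ∪ U) := by
  intro x hx y hy
  rcases mem_union.1 hx with hx | hx <;> rcases mem_union.1 hy with hy | hy
  · exact mem_union_left _ (hT x hx y hy)
  · exact mem_union_right _ (hTU x hx y hy).1
  · exact mem_union_right _ (hTU y hy x hx).2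
  · exact mem_union_right _ (hU x hx y hy)

theorem MulClosed.erase {T : Finset S} [DecidableEq S] (hT : MulClosed T) {v : S}
    (hv : ∀ x ∈ T, ∀ y ∈ T, x * y = v → x = v ∨ y = v) : MulClosed (T.erase v) := by
  intro x hx y hy
  refine mem_erase.2 ⟨fun h => ?_, hT x (mem_of_mem_erase hx) y (mem_of_mem_erase hy)⟩
  rcases hv x (mem_of_mem_erase hx) y (mem_of_mem_erase hy) h with rfl | rfl
  exacts [ne_of_mem_erase hx rfl, ne_of_mem_erase hy rfl]

open scoped Classical in
noncomputable def jClass (W : Finset S) (m : S) : Finset S := W.filter (AntisymmRel JLe · m)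

open scoped Classical in
theorem mem_jClass {W : Finset S} {m x : S} : x ∈ jClass W m ↔ x ∈ W ∧ AntisymmRel JLe x m :=
  mem_filter

theorem jClass_subset (W : Finset S) (m : S) : jClass W m ⊆ W := fun _ hx => (mem_jClass.1 hx).1

theorem mul_eq_left_of_mul_eq {c d v : S} (hc : JLe c v) (hvc : v * c = v) (hvd : v * d = v) :
    c * d = c := by
  have hcv : c * v = c := by
    have h : c * v * c = c := hc
    rwa [mul_assoc, hvc] at h
  rw [← hcv, mul_assoc, hvd]

theorem mul_eq_right_of_mul_eq {c d v : S} (hd : JLe d v) (hcv : c * v = v) (hdv : d * v = v) :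
    c * d = d := by
  have hvd : v * d = d := by
    have h : d * v * d = d := hd
    rwa [hdv] at h
  rw [← hvd, ← mul_assoc, hcv]

variable [IsBand S]

theorem mul_self_mul (a b : S) : a * (a * b) = a * b := by
  rw [← mul_assoc, mul_self]

theorem jLe_refl (a : S) : JLe a a := by
  rw [JLe, mul_self, mul_self]

theorem jLe_mul_mul (x c y : S) : JLe (x * c * y) c :=
  calc x * c * y * c * (x * c * y) = x * c * y * c * x * ((c * y) * (c * y)) := by
        simp only [mul_self, mul_assoc]
    _ = (x * (c * (y * c))) * (x * (c * (y * c))) * y := by simp only [mul_assoc]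
    _ = x * ((c * y) * (c * y)) := by rw [mul_self]; simp only [mul_assoc]
    _ = x * c * y := by rw [mul_self, mul_assoc]

theorem JLe.trans {a b c : S} (hab : JLe a b) (hbc : JLe b c) : JLe a c := by
  have h : a = a * b * c * (b * a) := by
    conv_lhs => rw [← hab, ← hbc]
    simp only [mul_assoc]
  rw [h]
  exact jLe_mul_mul _ _ _

theorem jLe_mul_left (a b : S) : JLe (a * b) a := by
  simpa [mul_self] using jLe_mul_mul a a b

theorem jLe_mul_right (a b : S) : JLe (a * b) b := by
  simpa [mul_assoc, mul_self] using jLe_mul_mul a b b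

theorem JLe.mul {a p q : S} (hp : JLe a p) (hq : JLe a q) : JLe a (p * q) :=
  calc a * (p * q) * a = a * q * a * (p * q) * (a * p * a) := by rw [hp, hq]
    _ = a * ((q * (a * p)) * (q * (a * p))) * a := by simp only [mul_assoc]
    _ = a * q * (a * p * a) := by simp only [mul_self, mul_assoc]
    _ = a := by rw [hp, hq]

instance : Std.Refl (JLe (S := S)) := ⟨jLe_refl⟩

instance : IsTrans S JLe := ⟨fun _ _ _ => JLe.trans⟩

theorem antisymmRel_mul {x y u : S} (hx : AntisymmRel JLe x u) (hy : AntisymmRel JLe y u) :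
    AntisymmRel JLe (x * y) u :=
  ⟨(jLe_mul_left x y).trans hx.1, hx.2.mul hy.2⟩

theorem antisymmRel_mul_left_of_jLe {c δ : S} (h : JLe c δ) : AntisymmRel JLe (δ * c) c :=
  ⟨jLe_mul_right δ c, by
    show c * (δ * c) * c = c
    rw [← mul_assoc, h, mul_self]⟩

theorem antisymmRel_mul_right_of_jLe {c δ : S} (h : JLe c δ) : AntisymmRel JLe (c * δ) c :=
  ⟨jLe_mul_left c δ, by
    show c * (c * δ) * c = c
    rw [mul_self_mul, h]⟩

theorem jLe_of_mem_closure {G : Set S} {y : S} (hy : y ∈ Subsemigroup.closure G) {x : S}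
    (hx : ∀ g ∈ G, JLe y g → JLe x g) : JLe x y := by
  induction hy using Subsemigroup.closure_induction generalizing x with
  | mem g hg => exact hx g hg (jLe_refl g)
  | mul y₁ y₂ _ _ ih₁ ih₂ =>
    exact (ih₁ fun g hg h => hx g hg ((jLe_mul_left y₁ y₂).trans h)).mul
      (ih₂ fun g hg h => hx g hg ((jLe_mul_right y₁ y₂).trans h))

/-- Elements of the closure lying below the same generators are `J`-equivalent, so the closure
meets only finitely many `J`-classes. -/
theorem finite_closure_range {ι : Type*} [Finite ι] (g : ι → S)
    (hJ : ∀ x : S, {y | AntisymmRel JLe x y}.Finite) :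
    (Subsemigroup.closure (Set.range g) : Set S).Finite := by
  refine Set.Finite.of_finite_fibers (fun x => {i | JLe x (g i)}) (Set.toFinite _) ?_
  rintro _ ⟨x, hx, rfl⟩
  refine (hJ x).subset fun y ⟨hy, hxy⟩ => ?_
  have hxy : ∀ i, JLe y (g i) ↔ JLe x (g i) := fun i => Set.ext_iff.1 hxy i
  exact ⟨jLe_of_mem_closure hy (by rintro _ ⟨i, rfl⟩; exact (hxy i).1),
    jLe_of_mem_closure hx (by rintro _ ⟨i, rfl⟩; exact (hxy i).2)⟩

section Rectangle

variable [DecidableEq S] {D A B : Finset S} {u : S}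

theorem mulClosed_mul (hD : ∀ x ∈ D, AntisymmRel JLe x u) (hA : A ⊆ D.image (· * u))
    (hB : B ⊆ D.image (u * ·)) : MulClosed (A * B) := by
  intro p hp q hq
  obtain ⟨x, hx, y, hy, rfl⟩ := mem_mul.1 hp
  obtain ⟨x', hx', y', hy', rfl⟩ := mem_mul.1 hq
  obtain ⟨a, -, rfl⟩ := mem_image.1 (hA hx)
  obtain ⟨b, hb, rfl⟩ := mem_image.1 (hB hy)
  obtain ⟨a', ha', rfl⟩ := mem_image.1 (hA hx')
  obtain ⟨b', -, rfl⟩ := mem_image.1 (hB hy')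
  have hu : u * (b * a') * u = u := (hD b hb).2.mul (hD a' ha').2
  have : a * u * (u * b) * (a' * u * (u * b')) = a * u * (u * b') :=
    calc _ = a * (u * (b * a') * u) * (u * b') := by simp only [mul_assoc, mul_self_mul]
      _ = a * u * (u * b') := by rw [hu]
  rw [this]
  exact mul_mem_mul hx hy'

theorem card_mul_of_subset_image (hD : ∀ x ∈ D, AntisymmRel JLe x u)
    (hA : A ⊆ D.image (· * u)) (hB : B ⊆ D.image (u * ·)) :
    (A * B).card = A.card * B.card := by
  have hleft : ∀ x ∈ A, ∀ y ∈ B, x * y * u = x := by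
    intro x hx y hy
    obtain ⟨a, -, rfl⟩ := mem_image.1 (hA hx)
    obtain ⟨b, hb, rfl⟩ := mem_image.1 (hB hy)
    calc a * u * (u * b) * u = a * (u * b * u) := by simp only [mul_assoc, mul_self_mul]
      _ = a * u := by rw [(hD b hb).2]
  have hright : ∀ x ∈ A, ∀ y ∈ B, u * (x * y) = y := by
    intro x hx y hy
    obtain ⟨a, ha, rfl⟩ := mem_image.1 (hA hx)
    obtain ⟨b, -, rfl⟩ := mem_image.1 (hB hy)
    calc u * (a * u * (u * b)) = u * a * u * b := by simp only [mul_assoc, mul_self_mul]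
      _ = u * b := by rw [(hD a ha).2]
  rw [card_mul_iff]
  rintro ⟨x, y⟩ ⟨hx, hy⟩ ⟨x', y'⟩ ⟨hx', hy'⟩ h
  have h₁ := hleft x hx y hy
  have h₂ := hright x hx y hy
  simp only at h
  rw [h, hleft x' hx' y' hy'] at h₁
  rw [h, hright x' hx' y' hy'] at h₂
  rw [h₁, h₂]

theorem card_le_card_image_mul_card_image (hD : ∀ x ∈ D, AntisymmRel JLe x u) :
    D.card ≤ (D.image (· * u)).card * (D.image (u * ·)).card := by
  rw [← card_product]
  refine card_le_card_of_injOn (fun w => (w * u, u * w)) (fun w hw => ?_)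
    (fun w hw w' hw' h => ?_)
  · simp only [coe_product, Set.mem_prod, coe_image, Set.mem_image, mem_coe]
    exact ⟨⟨w, hw, rfl⟩, ⟨w, hw, rfl⟩⟩
  · simp only [Prod.mk.injEq] at h
    have hw : w * u * (u * w) = w := by rw [mul_assoc, mul_self_mul, ← mul_assoc, (hD w hw).1]
    have hw' : w' * u * (u * w') = w' := by
      rw [mul_assoc, mul_self_mul, ← mul_assoc, (hD w' hw').1]
    rw [← hw, ← hw', h.1, h.2]

theorem exists_mulClosed_mul_card_eq (hD : ∀ x ∈ D, AntisymmRel JLe x u) {a b : ℕ}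
    (ha : a ≤ (D.image (· * u)).card) (hb : b ≤ (D.image (u * ·)).card) :
    ∃ A ⊆ D.image (· * u), ∃ B ⊆ D.image (u * ·), (A * B).card = a * b ∧ MulClosed (A * B) := by
  obtain ⟨A, hA, rfl⟩ := exists_subset_card_eq ha
  obtain ⟨B, hB, rfl⟩ := exists_subset_card_eq hb
  exact ⟨A, hA, B, hB, card_mul_of_subset_image hD hA hB, mulClosed_mul hD hA hB⟩

theorem exists_mulClosed_card_six_of_antisymmRel (hD : 6 ≤ D.card)
    (hJ : ∀ x ∈ D, ∀ y ∈ D, AntisymmRel JLe x y) : ∃ T : Finset S, T.card = 6 ∧ MulClosed T := by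
  obtain ⟨u, hu⟩ := card_pos.1 (by omega : 0 < D.card)
  have hDu : ∀ x ∈ D, AntisymmRel JLe x u := fun x hx => hJ x hx u hu
  obtain ⟨a, ha, b, hb, hab⟩ := exists_mul_eq_of_le_mul
    (hD.trans (card_le_card_image_mul_card_image hDu)) (by omega)
  obtain ⟨A, -, B, -, hcard, hAB⟩ := exists_mulClosed_mul_card_eq hDu ha hb
  exact ⟨A * B, hcard.trans hab, hAB⟩

theorem forall_mul_eq_left_or_forall_mul_eq_right {C : Finset S} {v : S} (hC : MulClosed C)
    (hCJ : ∀ c ∈ C, AntisymmRel JLe c v) (hv : v ∈ C) (h3 : C.card ≤ 3) :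
    (∀ c ∈ C, ∀ d ∈ C, c * d = c) ∨ ∀ c ∈ C, ∀ d ∈ C, c * d = d := by
  have hsq : (C.image (· * v)).card * (C.image (v * ·)).card ≤ 3 := by
    rw [← card_mul_of_subset_image hCJ subset_rfl subset_rfl]
    refine (card_le_card (mul_subset_iff.2 fun x hx y hy => hC x ?_ y ?_)).trans h3
    · obtain ⟨a, ha, rfl⟩ := mem_image.1 hx
      exact hC a ha v hv
    · obtain ⟨b, hb, rfl⟩ := mem_image.1 hy
      exact hC v hv b hb
  obtain h | h : (C.image (v * ·)).card ≤ 1 ∨ (C.image (· * v)).card ≤ 1 := by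
    by_contra! h
    nlinarith
  · have hvc : ∀ c ∈ C, v * c = v := fun c hc => by
      simpa [mul_self] using card_le_one.1 h _ (mem_image_of_mem _ hc) _ (mem_image_of_mem _ hv)
    exact .inl fun c hc d hd => mul_eq_left_of_mul_eq (hCJ c hc).1 (hvc c hc) (hvc d hd)
  · have hcv : ∀ c ∈ C, c * v = v := fun c hc => by
      simpa [mul_self] using card_le_one.1 h _ (mem_image_of_mem _ hc) _ (mem_image_of_mem _ hv)
    exact .inr fun c hc d hd => mul_eq_right_of_mul_eq (hCJ d hd).1 (hcv c hc) (hcv d hd)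

section Stable

variable {Δ C : Finset S} (hΔ : MulClosed Δ) (hC : 2 ≤ C.card)
  (hΔC : ∀ δ ∈ Δ, ∀ c ∈ C, δ * c ∈ C ∧ c * δ ∈ C) (hbelow : ∀ c ∈ C, ∀ δ ∈ Δ, JLe c δ)
include hΔ hC hΔC hbelow

theorem exists_stable_pair_of_mul_eq_left (hcols : ∀ δ ∈ Δ, (Δ.image (· * δ)).card ≤ 2)
    (hzero : ∀ c ∈ C, ∀ d ∈ C, c * d = c) :
    ∃ V ⊆ C, V.card = 2 ∧ MulClosed V ∧ ∀ δ ∈ Δ, ∀ c ∈ V, δ * c ∈ V ∧ c * δ ∈ V := by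
  obtain ⟨V, hVC, hV2, hV⟩ := exists_invariant_pair (fun δ c => δ * c) Δ C hC
    (fun δ hδ c hc => (hΔC δ hδ c hc).1)
    (fun δ hδ δ' hδ' => ⟨δ * δ', hΔ δ hδ δ' hδ', fun c => (mul_assoc δ δ' c).symm⟩)
    (fun δ _ c => mul_self_mul δ c) fun δ hδ c _ =>
      calc (Δ.image fun j => j * (δ * c)).card = ((Δ.image (· * δ)).image (· * c)).card := by
            simp only [image_image, Function.comp_def, mul_assoc]
        _ ≤ 2 := card_image_le.trans (hcols δ hδ)
  refine ⟨V, hVC, hV2, fun c hc d hd => by rwa [hzero c (hVC hc) d (hVC hd)],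
    fun δ hδ c hc => ⟨hV δ hδ c hc, ?_⟩⟩
  rwa [← hzero _ (hΔC δ hδ c (hVC hc)).2 c (hVC hc), hbelow c (hVC hc) δ hδ]

theorem exists_stable_pair_of_mul_eq_right (hrows : ∀ δ ∈ Δ, (Δ.image (δ * ·)).card ≤ 2)
    (hzero : ∀ c ∈ C, ∀ d ∈ C, c * d = d) :
    ∃ V ⊆ C, V.card = 2 ∧ MulClosed V ∧ ∀ δ ∈ Δ, ∀ c ∈ V, δ * c ∈ V ∧ c * δ ∈ V := by
  obtain ⟨V, hVC, hV2, hV⟩ := exists_invariant_pair (fun δ c => c * δ) Δ C hC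
    (fun δ hδ c hc => (hΔC δ hδ c hc).2)
    (fun δ hδ δ' hδ' => ⟨δ' * δ, hΔ δ' hδ' δ hδ, fun c => mul_assoc c δ' δ⟩)
    (fun δ _ c => by rw [mul_assoc, mul_self]) fun δ hδ c _ =>
      calc (Δ.image fun j => c * δ * j).card = ((Δ.image (δ * ·)).image (c * ·)).card := by
            simp only [image_image, Function.comp_def, mul_assoc]
        _ ≤ 2 := card_image_le.trans (hrows δ hδ)
  refine ⟨V, hVC, hV2, fun c hc d hd => by rwa [hzero c (hVC hc) d (hVC hd)],
    fun δ hδ c hc => ⟨?_, hV δ hδ c hc⟩⟩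
  rwa [← hzero c (hVC hc) _ (hΔC δ hδ c (hVC hc)).1, ← mul_assoc, hbelow c (hVC hc) δ hδ]

end Stable

end Rectangle

section Finite

open scoped Classical

variable {W : Finset S} {m : S}

theorem mulClosed_jClass (hW : MulClosed W) : MulClosed (jClass W m) := by
  intro x hx y hy
  rw [mem_jClass] at hx hy ⊢
  exact ⟨hW x hx.1 y hy.1, antisymmRel_mul hx.2 hy.2⟩

theorem mul_mem_jClass_of_jLe {c δ : S} (hc : c ∈ jClass W m) (hcδ : JLe c δ)
    (hδc : δ * c ∈ W) (hcδ' : c * δ ∈ W) : δ * c ∈ jClass W m ∧ c * δ ∈ jClass W m :=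
  ⟨mem_jClass.2 ⟨hδc, (antisymmRel_mul_left_of_jLe hcδ).trans (mem_jClass.1 hc).2⟩,
    mem_jClass.2 ⟨hcδ', (antisymmRel_mul_right_of_jLe hcδ).trans (mem_jClass.1 hc).2⟩⟩

theorem exists_jLe_maximal {x : S} (hx : x ∈ W) :
    ∃ m ∈ W, JLe x m ∧ ∀ w ∈ W, JLe m w → JLe w m := by
  obtain ⟨m, hm, hmin⟩ := (W.filter (JLe x ·)).exists_min_image
    (fun m => (W.filter (JLe m ·)).card) ⟨x, mem_filter.2 ⟨hx, jLe_refl x⟩⟩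
  rw [mem_filter] at hm
  refine ⟨m, hm.1, hm.2, fun w hw hmw => ?_⟩
  have hsub : W.filter (JLe w ·) ⊆ W.filter (JLe m ·) :=
    monotone_filter_right _ fun v _ hwv => hmw.trans hwv
  have heq := eq_of_subset_of_card_le hsub (hmin w (mem_filter.2 ⟨hw, hm.2.trans hmw⟩))
  exact (mem_filter.1 (heq ▸ mem_filter.2 ⟨hm.1, jLe_refl m⟩)).2

theorem mul_mem_sdiff_jClass (hW : MulClosed W) (hmax : ∀ w ∈ W, JLe m w → JLe w m) {x v : S}
    (hx : x ∈ W) (hv : v ∈ W \ jClass W m) :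
    x * v ∈ W \ jClass W m ∧ v * x ∈ W \ jClass W m := by
  simp only [mem_sdiff, mem_jClass, not_and] at hv ⊢
  have hnot : ∀ y, JLe y v → ¬ AntisymmRel JLe y m := fun y hyv hym =>
    hv.2 hv.1 ⟨hmax v hv.1 (hym.2.trans hyv), hym.2.trans hyv⟩
  exact ⟨⟨hW x hx v hv.1, fun _ => hnot _ (jLe_mul_right x v)⟩,
    ⟨hW v hv.1 x hx, fun _ => hnot _ (jLe_mul_left v x)⟩⟩

theorem MulClosed.sdiff_jClass (hW : MulClosed W) (hmax : ∀ w ∈ W, JLe m w → JLe w m) :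
    MulClosed (W \ jClass W m) :=
  fun _ hx _ hy => (mul_mem_sdiff_jClass hW hmax (mem_sdiff.1 hx).1 hy).1

theorem exists_mulClosed_card_eq_mul_add (hW : MulClosed W)
    (hmax : ∀ w ∈ W, JLe m w → JLe w m) {u : S} (hu : u ∈ jClass W m) {a b : ℕ}
    (ha : a ≤ ((jClass W m).image (· * u)).card) (hb : b ≤ ((jClass W m).image (u * ·)).card) :
    ∃ T : Finset S, T.card = a * b + (W \ jClass W m).card ∧ MulClosed T := by
  have hΔu : ∀ x ∈ jClass W m, AntisymmRel JLe x u :=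
    fun x hx => (mem_jClass.1 hx).2.trans (mem_jClass.1 hu).2.symm
  obtain ⟨A, hA, B, hB, hcard, hAB⟩ := exists_mulClosed_mul_card_eq hΔu ha hb
  have hABΔ : A * B ⊆ jClass W m := by
    refine mul_subset_iff.2 fun x hx y hy => mulClosed_jClass hW x ?_ y ?_
    · obtain ⟨a, ha, rfl⟩ := mem_image.1 (hA hx)
      exact mulClosed_jClass hW a ha u hu
    · obtain ⟨b, hb, rfl⟩ := mem_image.1 (hB hy)
      exact mulClosed_jClass hW u hu b hb
  refine ⟨A * B ∪ (W \ jClass W m), ?_, hAB.union (hW.sdiff_jClass hmax) fun x hx v hv =>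
    mul_mem_sdiff_jClass hW hmax (jClass_subset W m (hABΔ hx)) hv⟩
  rw [card_union_of_disjoint (disjoint_of_subset_left hABΔ disjoint_sdiff), hcard]

/-- The class of `m` is a `2 × 2` rectangular band on top of a `3`-element ideal: the one
configuration in which neither that ideal nor its union with a sub-rectangle of the class has six
elements. -/
def IsExceptional (W : Finset S) (m : S) : Prop :=
  (jClass W m).card = 4 ∧ (W \ jClass W m).card = 3 ∧
    ∀ u ∈ jClass W m, ((jClass W m).image (· * u)).card ≤ 2 ∧ ((jClass W m).image (u * ·)).card ≤ 2

theorem exists_mulClosed_card_six_or_isExceptional (hW : MulClosed W) (h7 : 7 ≤ W.card)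
    (ih : ∀ V ⊂ W, MulClosed V → 6 ≤ V.card → ∃ T : Finset S, T.card = 6 ∧ MulClosed T)
    (hm : m ∈ W) (hmax : ∀ w ∈ W, JLe m w → JLe w m) :
    (∃ T : Finset S, T.card = 6 ∧ MulClosed T) ∨ IsExceptional W m := by
  set Δ := jClass W m
  have hcard : (W \ Δ).card + Δ.card = W.card := card_sdiff_add_card_eq_card (jClass_subset W m)
  have hΔJ : ∀ x ∈ Δ, AntisymmRel JLe x m := fun x hx => (mem_jClass.1 hx).2
  have hmΔ : m ∈ Δ := mem_jClass.2 ⟨hm, .rfl⟩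
  have hsix : ∀ u ∈ Δ, ∀ a ≤ (Δ.image (· * u)).card, ∀ b ≤ (Δ.image (u * ·)).card,
      a * b + (W \ Δ).card = 6 → ∃ T : Finset S, T.card = 6 ∧ MulClosed T :=
    fun u hu a ha b hb hab =>
      (exists_mulClosed_card_eq_mul_add hW hmax hu ha hb).imp fun T hT => ⟨hT.1.trans hab, hT.2⟩
  by_cases h6 : 6 ≤ (W \ Δ).card
  · exact .inl (ih _ (sdiff_ssubset (jClass_subset W m) ⟨m, hmΔ⟩) (hW.sdiff_jClass hmax) h6)
  by_cases hΔ6 : 6 ≤ Δ.card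
  · exact .inl (exists_mulClosed_card_six_of_antisymmRel hΔ6 fun x hx y hy =>
      (hΔJ x hx).trans (hΔJ y hy).symm)
  have hle := card_le_card_image_mul_card_image hΔJ
  by_cases h3 : (W \ Δ).card = 3
  · by_cases hbig : ∃ u ∈ Δ, 3 ≤ (Δ.image (· * u)).card ∨ 3 ≤ (Δ.image (u * ·)).card
    · obtain ⟨u, hu, h | h⟩ := hbig
      · exact .inl (hsix u hu 3 h 1 (card_pos.2 ⟨u * u, mem_image_of_mem _ hu⟩) (by omega))
      · exact .inl (hsix u hu 1 (card_pos.2 ⟨u * u, mem_image_of_mem _ hu⟩) 3 h (by omega))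
    push Not at hbig
    refine .inr ⟨?_, h3, fun u hu => ⟨by linarith [hbig u hu], by linarith [hbig u hu]⟩⟩
    obtain ⟨hm₁, hm₂⟩ := hbig m hmΔ
    have : Δ.card ≤ 2 * 2 := hle.trans (Nat.mul_le_mul (by omega) (by omega))
    show Δ.card = 4
    omega
  · obtain ⟨a, ha, b, hb, hab⟩ := exists_mul_eq_of_le_mul (k := 6 - (W \ Δ).card)
      (le_trans (by omega) hle) (by omega)
    exact .inl (hsix m hmΔ a ha b hb (by omega))

theorem MulClosed.erase_of_forall_jLe (hW : MulClosed W) {Δ : Finset S} (hΔ : MulClosed Δ)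
    {v : S} (hvΔ : v ∉ Δ) (hv : ∀ z ∈ W \ Δ, JLe v z → z = v) : MulClosed (W.erase v) := by
  refine hW.erase fun x hx y hy hxy => ?_
  by_cases hxΔ : x ∈ Δ
  · by_cases hyΔ : y ∈ Δ
    · exact absurd (hxy ▸ hΔ x hxΔ y hyΔ) hvΔ
    · exact .inr (hv y (mem_sdiff.2 ⟨hy, hyΔ⟩) (hxy ▸ jLe_mul_right x y))
  · exact .inl (hv x (mem_sdiff.2 ⟨hx, hxΔ⟩) (hxy ▸ jLe_mul_left x y))

theorem exists_mulClosed_card_six_of_isExceptional (hW : MulClosed W)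
    (htop : ∀ w ∈ W, JLe w m) (hex : IsExceptional W m) :
    ∃ T : Finset S, T.card = 6 ∧ MulClosed T := by
  obtain ⟨hΔ4, hW'3, hrows⟩ := hex
  set Δ := jClass W m
  set W' := W \ Δ
  have hmax : ∀ w ∈ W, JLe m w → JLe w m := fun w hw _ => htop w hw
  have hΔ : MulClosed Δ := mulClosed_jClass hW
  have hW' : MulClosed W' := hW.sdiff_jClass hmax
  have hbelow : ∀ v ∈ W', ∀ δ ∈ Δ, JLe v δ :=
    fun v hv δ hδ => (htop v (mem_sdiff.1 hv).1).trans (mem_jClass.1 hδ).2.2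
  obtain ⟨x, hx⟩ := card_pos.1 (by omega : 0 < W'.card)
  obtain ⟨v, hv, -, hvmax⟩ := exists_jLe_maximal hx
  set C := jClass W' v
  have hCW' : C ⊆ W' := jClass_subset W' v
  have hCJ : ∀ c ∈ C, AntisymmRel JLe c v := fun c hc => (mem_jClass.1 hc).2
  have hvC : v ∈ C := mem_jClass.2 ⟨hv, .rfl⟩
  have hCstable : ∀ δ ∈ Δ, ∀ c ∈ C, δ * c ∈ C ∧ c * δ ∈ C := fun δ hδ c hc =>
    have hideal := mul_mem_sdiff_jClass hW hmax (jClass_subset W m hδ) (hCW' hc)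
    mul_mem_jClass_of_jLe hc (hbelow c (hCW' hc) δ hδ) hideal.1 hideal.2
  obtain hC1 | hC2 : C.card ≤ 1 ∨ 2 ≤ C.card := by omega
  · -- `v` is maximal in `W'` and alone in its class, so it is not a product of other elements
    have hW7 : W.card = 7 := by
      have : W'.card + Δ.card = W.card := card_sdiff_add_card_eq_card (jClass_subset W m)
      omega
    refine ⟨W.erase v, by rw [card_erase_of_mem (mem_sdiff.1 hv).1, hW7],
      hW.erase_of_forall_jLe hΔ (mem_sdiff.1 hv).2 fun z hz hvz => ?_⟩
    exact card_le_one.1 hC1 z (mem_jClass.2 ⟨hz, hvmax z hz hvz, hvz⟩) v hvC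
  suffices ∃ V ⊆ C, V.card = 2 ∧ MulClosed V ∧ ∀ δ ∈ Δ, ∀ c ∈ V, δ * c ∈ V ∧ c * δ ∈ V by
    obtain ⟨V, hVC, hV2, hV, hΔV⟩ := this
    refine ⟨Δ ∪ V, ?_, hΔ.union hV hΔV⟩
    rw [card_union_of_disjoint (disjoint_of_subset_right (hVC.trans hCW') disjoint_sdiff), hΔ4, hV2]
  have hCbelow : ∀ c ∈ C, ∀ δ ∈ Δ, JLe c δ := fun c hc => hbelow c (hCW' hc)
  rcases forall_mul_eq_left_or_forall_mul_eq_right (mulClosed_jClass hW') hCJ hvC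
    ((card_le_card hCW').trans hW'3.le) with hzero | hzero
  · exact exists_stable_pair_of_mul_eq_left hΔ hC2 hCstable hCbelow (fun δ hδ => (hrows δ hδ).1)
      hzero
  · exact exists_stable_pair_of_mul_eq_right hΔ hC2 hCstable hCbelow (fun δ hδ => (hrows δ hδ).2)
      hzero

theorem MulClosed.exists_mulClosed_card_six (hW : MulClosed W) (h6 : 6 ≤ W.card) :
    ∃ T : Finset S, T.card = 6 ∧ MulClosed T := by
  induction W using Finset.strongInduction with
  | H W ih =>
  obtain h6 | h7 := h6.eq_or_lt
  · exact ⟨W, h6.symm, hW⟩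
  obtain ⟨x, hx⟩ := card_pos.1 (by omega : 0 < W.card)
  obtain ⟨m, hm, -, hmax⟩ := exists_jLe_maximal hx
  obtain hT | hex := exists_mulClosed_card_six_or_isExceptional hW h7 ih hm hmax
  · exact hT
  by_cases htop : ∀ w ∈ W, JLe w m
  · exact exists_mulClosed_card_six_of_isExceptional hW htop hex
  push Not at htop
  obtain ⟨w, hw, hwm⟩ := htop
  obtain ⟨m', hm', hwm', hmax'⟩ := exists_jLe_maximal hw
  obtain hT | hex' := exists_mulClosed_card_six_or_isExceptional hW h7 ih hm' hmax'
  · exact hT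
  -- otherwise the classes of `m` and `m'` would be disjoint `4`-element subsets of `W`, which has
  -- seven elements
  have hdisj : Disjoint (jClass W m) (jClass W m') := disjoint_left.2 fun x hx hx' =>
    hwm (hwm'.trans ((mem_jClass.1 hx').2.symm.trans (mem_jClass.1 hx).2).1)
  have h8 := card_le_card (union_subset (jClass_subset W m) (jClass_subset W m'))
  have h7' := card_sdiff_add_card_eq_card (jClass_subset W m)
  rw [card_union_of_disjoint hdisj, hex.1, hex'.1] at h8
  rw [hex.2.1, hex.1] at h7'
  omega

end Finite

end IsBand

open IsBand in
/-- Every idempotent semigroup with at least 6 elements has a subsemigroup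
of order exactly 6. -/
theorem stmt_6 (S : Type*) [Semigroup S] (hidem : ∀ x : S, x * x = x)
    (hcard : ∃ f : Fin 6 → S, Function.Injective f) :
    ∃ T : Finset S, T.card = 6 ∧ ∀ x ∈ T, ∀ y ∈ T, x * y ∈ T := by
  classical
  have : IsBand S := ⟨hidem⟩
  obtain ⟨z, hz⟩ := hcard
  by_cases hJ : ∀ x : S, {y | AntisymmRel JLe x y}.Finite
  · have hfin := finite_closure_range z hJ
    refine MulClosed.exists_mulClosed_card_six (W := hfin.toFinset) (fun x hx y hy => ?_) ?_
    · simp only [Set.Finite.mem_toFinset, SetLike.mem_coe] at hx hy ⊢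
      exact mul_mem hx hy
    · calc 6 = (univ.image z).card := by
            rw [card_image_of_injective _ hz, card_univ, Fintype.card_fin]
        _ ≤ hfin.toFinset.card := card_le_card fun y hy => by
          obtain ⟨i, -, rfl⟩ := mem_image.1 hy
          simpa using Subsemigroup.subset_closure (Set.mem_range_self (f := z) i)
  · push Not at hJ
    obtain ⟨x, hx⟩ := hJ
    obtain ⟨D, hDx, hD6⟩ := hx.exists_subset_card_eq 6
    exact exists_mulClosed_card_six_of_antisymmRel hD6.ge fun y hy y' hy' =>
      (hDx hy).symm.trans (hDx hy')
end

section
/- For every positive integer n with n ∉ {1, 2, 4, 6, 12}, there exist positive integers p and q such that max{(p−1)q, p(q−1)} < n < pq. -/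
lemma key_7 (n q : ℕ) (h2 : 2 ≤ q) (hq : q * q ≤ n) (hd : ¬ q ∣ n) :
    ∃ p q' : ℕ, 0 < p ∧ 0 < q' ∧
      max ((p - 1) * q') (p * (q' - 1)) < n ∧ n < p * q' := by
  obtain ⟨d, r, hdr, hr, hr0, hqd⟩ :
      ∃ d r, d * q + r = n ∧ r < q ∧ 0 < r ∧ q ≤ d := by
    refine ⟨n / q, n % q, Nat.div_add_mod' n q, 
      Nat.mod_lt _ (by omega), 
      Nat.pos_of_ne_zero (fun hz => hd (Nat.dvd_of_mod_eq_zero hz)), ?_⟩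
    by_contra hc
    push_neg at hc
    have : n / q ≤ q - 1 := by omega
    have h3 : n / q * q ≤ (q - 1) * q := Nat.mul_le_mul_right q this
    have h4 : n / q * q + n % q = n := Nat.div_add_mod' n q
    have h5 : (q - 1) * q + q = q * q := by
      have : (q - 1) * q + q = (q - 1 + 1) * q := by ring
      rw [this, Nat.sub_add_cancel (by omega)]
    have hmt : n % q < q := Nat.mod_lt _ (by omega)
    omega
  refine ⟨d + 1, q, by omega, by omega, ?_, ?_⟩
  · rw [max_lt_iff]
    constructor
    · have : (d + 1 - 1) * q = d * q := by simp
      omega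
    · have e2 : (d + 1) * (q - 1) + (d + 1) = d * q + q := by
        have h5 : (d + 1) * (q - 1) + (d + 1) = (d + 1) * (q - 1 + 1) := by ring
        rw [h5, Nat.sub_add_cancel (by omega)]; ring
      omega
  · have e3 : (d + 1) * q = d * q + q := by ring
    omega

/-- For every positive integer `n ∉ {1, 2, 4, 6, 12}` there are positive
integers `p`, `q` with `max ((p-1)q) (p(q-1)) < n < pq`. -/
theorem stmt_7 (n : ℕ) (hn : 0 < n) (h : n ∉ ({1, 2, 4, 6, 12} : Set ℕ)) :
    ∃ p q : ℕ, 0 < p ∧ 0 < q ∧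
      max ((p - 1) * q) (p * (q - 1)) < n ∧ n < p * q := by
  simp only [Set.mem_insert_iff, Set.mem_singleton_iff, not_or] at h
  obtain ⟨h1, h2, h4, h6, h12⟩ := h
  by_cases hs : n ≤ 35
  · interval_cases n <;> first | omega | exact ⟨2, 2, by decide⟩ | exact ⟨2, 3, by decide⟩ | exact ⟨2, 4, by decide⟩ | exact ⟨3, 3, by decide⟩ | exact ⟨2, 5, by decide⟩ | exact ⟨3, 4, by decide⟩ | exact ⟨2, 6, by decide⟩ | exact ⟨2, 7, by decide⟩ | exact ⟨3, 5, by decide⟩ | exact ⟨2, 8, by decide⟩ | exact ⟨3, 6, by decide⟩ | exact ⟨2, 9, by decide⟩ | exact ⟨4, 5, by decide⟩ | exact ⟨2, 10, by decide⟩ | exact ⟨3, 7, by decide⟩ | exact ⟨2, 11, by decide⟩ | exact ⟨3, 8, by decide⟩ | exact ⟨2, 12, by decide⟩ | exact ⟨5, 5, by decide⟩ | exact ⟨2, 13, by decide⟩ | exact ⟨3, 9, by decide⟩ | exact ⟨2, 14, by decide⟩ | exact ⟨3, 10, by decide⟩ | exact ⟨2, 15, by decide⟩ | exact ⟨4, 8,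 by decide⟩ | exact ⟨2, 16, by decide⟩ | exact ⟨3, 11, by decide⟩ | exact ⟨2, 17, by decide⟩ | exact ⟨3, 12, by decide⟩ | exact ⟨2, 18, by decide⟩
  · push_neg at hs
    obtain ⟨a, ha4, hsq, hub⟩ :
        ∃ a : ℕ, 4 ≤ a ∧ (a + 2) * (a + 2) ≤ n ∧ n < (a + 3) * (a + 3) := by
      refine ⟨Nat.sqrt n - 2, ?_, ?_, ?_⟩
      · have : 6 ≤ Nat.sqrt n := Nat.le_sqrt.mpr (by omega)
        omega
      · have h6 : 6 ≤ Nat.sqrt n := Nat.le_sqrt.mpr (by omega)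
        have : Nat.sqrt n - 2 + 2 = Nat.sqrt n := by omega
        rw [this]
        simpa [pow_two] using Nat.sqrt_le' n
      · have h6 : 6 ≤ Nat.sqrt n := Nat.le_sqrt.mpr (by omega)
        have : Nat.sqrt n - 2 + 3 = Nat.sqrt n + 1 := by omega
        rw [this]
        simpa [pow_two, Nat.succ_eq_add_one] using Nat.lt_succ_sqrt' n
    by_cases d1 : a ∣ n
    · by_cases d2 : (a + 1) ∣ n
      · by_cases d3 : (a + 2) ∣ n
        · exfalso
          have hcop : Nat.Coprime (a + 1) (a + 2) := by
            have h5 : a + 2 = 1 + (a + 1) := by ring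
            rw [h5]
            exact Nat.coprime_add_self_right.mpr (Nat.coprime_one_right (a + 1))
          obtain ⟨k, hk⟩ := hcop.mul_dvd_of_dvd_of_dvd d2 d3
          have hk1 : k = 1 := by
            rcases Nat.lt_or_ge k 2 with hlt | hge
            · interval_cases k <;> [nlinarith; rfl]
            · exfalso
              have hmm : (a + 1) * (a + 2) * 2 ≤ (a + 1) * (a + 2) * k :=
                Nat.mul_le_mul_left _ hge
              nlinarith
          have hneq : n = a * (a + 3) + 2 := by rw [hk, hk1]; ring
          have ha2 : a ∣ 2 :=
            (Nat.dvd_add_right (dvd_mul_right a (a + 3))).mp (hneq ▸ d1)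
          have := Nat.le_of_dvd (by norm_num) ha2
          omega
        · exact key_7 n (a + 2) (by omega) hsq d3
      · refine key_7 n (a + 1) (by omega) (le_trans ?_ hsq) d2
        exact Nat.mul_le_mul (by omega) (by omega)
    · refine key_7 n a (by omega) (le_trans ?_ hsq) d1
      exact Nat.mul_le_mul (by omega) (by omega)
end

section
/- If positive integers p, q, n satisfy max{(p−1)q, p(q−1)} < n < pq, then the rectangular band S_{p,q} = Z_p × Z_q with multiplication (a₁,b₁)·(a₂,b₂) = (a₁,b₂) has no subsemigroup of order exactly n. -/
/-- The rectangular band operation on `Fin p × Fin q`. -/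
def rectOp {p q : ℕ} (x y : Fin p × Fin q) : Fin p × Fin q := (x.1, y.2)

/-- If `max ((p-1)q) (p(q-1)) < n < pq`, then the rectangular band
`Fin p × Fin q` has no subsemigroup of order exactly `n`. -/
theorem stmt_11 (p q n : ℕ) (hp : 0 < p) (hq : 0 < q) (hn : 0 < n)
    (hlow : max ((p - 1) * q) (p * (q - 1)) < n) (hhigh : n < p * q) :
    ¬ ∃ T : Finset (Fin p × Fin q),
        T.card = n ∧ ∀ x ∈ T, ∀ y ∈ T, rectOp x y ∈ T := by
  rintro ⟨T, hcard, hclosed⟩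
  set A := T.image Prod.fst with hA
  set B := T.image Prod.snd with hB
  have hTeq : T = A ×ˢ B := by
    apply Finset.Subset.antisymm
    · intro x hx
      exact Finset.mem_product.mpr ⟨Finset.mem_image_of_mem _ hx,
        Finset.mem_image_of_mem _ hx⟩
    · intro z hz
      obtain ⟨ha, hb⟩ := Finset.mem_product.mp hz
      obtain ⟨x, hxT, hx1⟩ := Finset.mem_image.mp ha
      obtain ⟨y, hyT, hy2⟩ := Finset.mem_image.mp hb
      have : rectOp x y ∈ T := hclosed x hxT y hyT
      have : (x.1, y.2) ∈ T := this
      rw [hx1, hy2] at this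
      simpa using this
  have hn' : n = A.card * B.card := by
    rw [← hcard, hTeq, Finset.card_product]
  have hAle : A.card ≤ p := by
    simpa using Finset.card_le_card (Finset.subset_univ A)
  have hBle : B.card ≤ q := by
    simpa using Finset.card_le_card (Finset.subset_univ B)
  rcases lt_or_eq_of_le hAle with h | h
  · have : n ≤ (p - 1) * q := by
      rw [hn']
      exact Nat.mul_le_mul (by omega) hBle
    have := le_max_left ((p - 1) * q) (p * (q - 1))
    omega
  · rcases lt_or_eq_of_le hBle with h' | h'
    · have : n ≤ p * (q - 1) := by
        rw [hn']
        exact Nat.mul_le_mul hAle (by omega)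
      have := le_max_right ((p - 1) * q) (p * (q - 1))
      omega
    · rw [← h, ← h'] at hhigh; omega
end

section
/- For every positive integer n with n ∉ {1, 2, 4, 6}, there exists a finite idempotent semigroup of order at least n that has no subsemigroup of order exactly n. -/
/-!
A rectangular band `A × B`, with `(a, b) * (c, d) = (a, d)`, is idempotent, and its
subsemigroups are exactly the rectangles `A' × B'`, so their orders are the products `i * j`
with `i ≤ |A|`, `j ≤ |B|`. No such product equals `n` for the band `2 × (n - 1)` when `n` is
odd, nor for `3 × ((n - 1) / 2)` when `3 ∤ n`. For `3 ∣ n` we put the band `2 × 2` on top of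
the band `3 × (n / 3 - 1)` along a constant homomorphism; a subsemigroup of the result meets
the two pieces in subsemigroups, so its order is `k + i * j` with `k ∈ {0, 1, 2, 4}`, `i ≤ 3`
and `j < n / 3`, which is never `n` once `n > 6`.
-/

open Finset

def HasSubsemigroupOfCard (S : Type*) [Mul S] (n : ℕ) : Prop :=
  ∃ T : Finset S, #T = n ∧ ∀ x ∈ T, ∀ y ∈ T, x * y ∈ T

def ExistsBandWithoutSubsemigroupOfCard (n : ℕ) : Prop :=
  ∃ (S : Type) (_ : Semigroup S) (_ : Fintype S),
    (∀ x : S, x * x = x) ∧ n ≤ Fintype.card S ∧ ¬ HasSubsemigroupOfCard S n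

theorem Finset.eq_image_fst_product_image_snd {α β : Type*} [DecidableEq α] [DecidableEq β]
    {T : Finset (α × β)} (hT : ∀ x ∈ T, ∀ y ∈ T, (x.1, y.2) ∈ T) :
    T = T.image Prod.fst ×ˢ T.image Prod.snd := by
  ext ⟨a, b⟩
  simp only [mem_product, mem_image]
  constructor
  · intro hab
    exact ⟨⟨(a, b), hab, rfl⟩, ⟨(a, b), hab, rfl⟩⟩
  · rintro ⟨⟨x, hx, rfl⟩, ⟨y, hy, rfl⟩⟩
    exact hT x hx y hy

def RectBand (α β : Type*) : Type _ := α × β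

namespace RectBand

variable {α β : Type*}

instance : Semigroup (RectBand α β) where
  mul x y := ((x : α × β).1, (y : α × β).2)
  mul_assoc _ _ _ := rfl

instance [Fintype α] [Fintype β] : Fintype (RectBand α β) :=
  inferInstanceAs (Fintype (α × β))

theorem card [Fintype α] [Fintype β] :
    Fintype.card (RectBand α β) = Fintype.card α * Fintype.card β :=
  Fintype.card_prod α β

theorem mul_self (x : RectBand α β) : x * x = x := rfl

theorem exists_mul_eq_of_hasSubsemigroupOfCard [Fintype α] [Fintype β] {n : ℕ}
    (h : HasSubsemigroupOfCard (RectBand α β) n) :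
    ∃ i ≤ Fintype.card α, ∃ j ≤ Fintype.card β, i * j = n := by
  classical
  obtain ⟨T, rfl, hT⟩ := h
  let T' : Finset (α × β) := T
  refine ⟨#(T'.image Prod.fst), card_le_univ _, #(T'.image Prod.snd), card_le_univ _, ?_⟩
  rw [← card_product, ← eq_image_fst_product_image_snd hT]
  rfl

theorem existsBandWithoutSubsemigroupOfCard {a b n : ℕ} (hn : n ≤ a * b)
    (hab : ∀ i ≤ a, ∀ j ≤ b, i * j ≠ n) : ExistsBandWithoutSubsemigroupOfCard n := by
  refine ⟨RectBand (Fin a) (Fin b), inferInstance, inferInstance, mul_self, ?_, fun h => ?_⟩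
  · simpa [card] using hn
  · obtain ⟨i, hi, j, hj, hij⟩ := exists_mul_eq_of_hasSubsemigroupOfCard h
    simp only [Fintype.card_fin] at hi hj
    exact hab i hi j hj hij

end RectBand

namespace Sum

variable {L R : Type*} [Semigroup L] [Semigroup R]

/-- The strong semilattice of semigroups `L > R` with structure map `φ`. -/
def mulOfMulHom (φ : L →ₙ* R) : L ⊕ R → L ⊕ R → L ⊕ R
  | inl a, inl b => inl (a * b)
  | inl a, inr r => inr (φ a * r)
  | inr r, inl a => inr (r * φ a)
  | inr r, inr s => inr (r * s)

abbrev semigroupOfMulHom (φ : L →ₙ* R) : Semigroup (L ⊕ R) where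
  mul := mulOfMulHom φ
  mul_assoc x y z := by
    change mulOfMulHom φ (mulOfMulHom φ x y) z = mulOfMulHom φ x (mulOfMulHom φ y z)
    rcases x with x | x <;> rcases y with y | y <;> rcases z with z | z <;>
      simp only [mulOfMulHom, map_mul, mul_assoc]

theorem exists_add_eq_of_hasSubsemigroupOfCard (φ : L →ₙ* R) {n : ℕ}
    (h : letI := semigroupOfMulHom φ; HasSubsemigroupOfCard (L ⊕ R) n) :
    ∃ k l, HasSubsemigroupOfCard L k ∧ HasSubsemigroupOfCard R l ∧ k + l = n := by
  let := semigroupOfMulHom φ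
  obtain ⟨T, rfl, hT⟩ := h
  refine ⟨_, _, ⟨T.toLeft, rfl, fun x hx y hy => ?_⟩, ⟨T.toRight, rfl, fun x hx y hy => ?_⟩,
    card_toLeft_add_card_toRight⟩
  · rw [mem_toLeft] at hx hy ⊢
    exact hT _ hx _ hy
  · rw [mem_toRight] at hx hy ⊢
    exact hT _ hx _ hy

end Sum

theorem existsBandWithoutSubsemigroupOfCard_of_odd {n : ℕ} (hn : Odd n) (h1 : n ≠ 1) :
    ExistsBandWithoutSubsemigroupOfCard n := by
  obtain ⟨m, rfl⟩ := hn
  refine RectBand.existsBandWithoutSubsemigroupOfCard (a := 2) (b := 2 * m) (by omega) ?_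
  intro i hi j hj
  interval_cases i <;> omega

theorem existsBandWithoutSubsemigroupOfCard_of_not_three_dvd {n : ℕ} (h3 : ¬ 3 ∣ n)
    (h5 : 5 ≤ n) : ExistsBandWithoutSubsemigroupOfCard n := by
  refine RectBand.existsBandWithoutSubsemigroupOfCard (a := 3) (b := (n - 1) / 2) (by omega) ?_
  intro i hi j hj
  interval_cases i <;> omega

theorem existsBandWithoutSubsemigroupOfCard_of_three_dvd {n : ℕ} (h3 : 3 ∣ n) (h6 : 6 < n) :
    ExistsBandWithoutSubsemigroupOfCard n := by
  obtain ⟨φ⟩ : Nonempty (RectBand (Fin 2) (Fin 2) →ₙ* RectBand (Fin 3) (Fin (n / 3 - 1))) :=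
    ⟨⟨fun _ => ((0 : Fin 3), ⟨0, by omega⟩), fun _ _ => rfl⟩⟩
  let := Sum.semigroupOfMulHom φ
  refine ⟨RectBand (Fin 2) (Fin 2) ⊕ RectBand (Fin 3) (Fin (n / 3 - 1)), inferInstance,
    inferInstance, ?_, ?_, fun h => ?_⟩
  · rintro (x | x) <;> rfl
  · simp only [Fintype.card_sum, RectBand.card, Fintype.card_fin]
    omega
  · obtain ⟨k, l, hk, hl, rfl⟩ := Sum.exists_add_eq_of_hasSubsemigroupOfCard φ h
    obtain ⟨i, hi, j, hj, rfl⟩ := RectBand.exists_mul_eq_of_hasSubsemigroupOfCard hk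
    obtain ⟨i', hi', j', hj', rfl⟩ := RectBand.exists_mul_eq_of_hasSubsemigroupOfCard hl
    simp only [Fintype.card_fin] at hi hj hi' hj'
    interval_cases i <;> interval_cases j <;> interval_cases i' <;> omega

/-- For every positive integer `n ∉ {1, 2, 4, 6}` there exists a finite
idempotent semigroup of order at least `n` with no subsemigroup of order
exactly `n`. -/
theorem stmt_12 (n : ℕ) (hn : 0 < n) (h : n ∉ ({1, 2, 4, 6} : Set ℕ)) :
    ∃ (S : Type) (_ : Semigroup S) (_ : Fintype S),
      (∀ x : S, x * x = x) ∧ n ≤ Fintype.card S ∧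
      ¬ ∃ T : Finset S, T.card = n ∧ ∀ x ∈ T, ∀ y ∈ T, x * y ∈ T := by
  simp only [Set.mem_insert_iff, Set.mem_singleton_iff, not_or] at h
  obtain ⟨h1, h2, h4, h6⟩ := h
  change ExistsBandWithoutSubsemigroupOfCard n
  by_cases h3 : 3 ∣ n
  · obtain rfl | h3' := eq_or_ne n 3
    · exact existsBandWithoutSubsemigroupOfCard_of_odd (by decide) (by decide)
    · exact existsBandWithoutSubsemigroupOfCard_of_three_dvd h3 (by omega)
  · exact existsBandWithoutSubsemigroupOfCard_of_not_three_dvd h3 (by omega)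
end

section
/- Define on the disjoint union S_{3,3} ⊔ S_{2,2} of the rectangular bands S_{3,3} = Z_3 × Z_3 and S_{2,2} = Z_2 × Z_2 the operation: x*y = x·y if x, y lie in the same component, x*y = x if x ∈ S_{2,2} and y ∈ S_{3,3}, and x*y = y if x ∈ S_{3,3} and y ∈ S_{2,2}. Then this is an idempotent semigroup of order 13 that has no subsemigroup of order 12. -/
/-- The underlying set `S_{3,3} ⊔ S_{2,2}`. -/
abbrev S33S22 : Type := (Fin 3 × Fin 3) ⊕ (Fin 2 × Fin 2)

/-- The operation on `S_{3,3} ⊔ S_{2,2}`: within a component, rectangular band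
multiplication; `x * y = x` if `x ∈ S_{2,2}, y ∈ S_{3,3}`; `x * y = y` if
`x ∈ S_{3,3}, y ∈ S_{2,2}`. -/
def mixOp : S33S22 → S33S22 → S33S22
  | .inl x, .inl y => .inl (x.1, y.2)
  | .inr x, .inr y => .inr (x.1, y.2)
  | .inr x, .inl _ => .inr x
  | .inl _, .inr y => .inr y

/-- `S_{3,3} ⊔ S_{2,2}` with the above operation is an idempotent semigroup of
order 13 with no subsemigroup of order 12. -/
theorem stmt_13 :
    (∀ x y z : S33S22, mixOp (mixOp x y) z = mixOp x (mixOp y z)) ∧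
    (∀ x : S33S22, mixOp x x = x) ∧
    Fintype.card S33S22 = 13 ∧
    ¬ ∃ T : Finset S33S22, T.card = 12 ∧ ∀ x ∈ T, ∀ y ∈ T, mixOp x y ∈ T := by
  refine ⟨?_, ?_, ?_, ?_⟩
  · rintro (x | x) (y | y) (z | z) <;> rfl
  · rintro (x | x) <;> rfl
  · rfl
  · rintro ⟨T, hcard, hclosed⟩
    have hc : Tᶜ.card = 1 := by
      rw [Finset.card_compl, hcard]; rfl
    obtain ⟨a, ha⟩ := Finset.card_eq_one.mp hc
    have hamem : a ∉ T := by
      have : a ∈ Tᶜ := ha ▸ Finset.mem_singleton_self a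
      exact Finset.mem_compl.mp this
    have hmem : ∀ x : S33S22, x ≠ a → x ∈ T := by
      intro x hx
      by_contra h
      have : x ∈ Tᶜ := Finset.mem_compl.mpr h
      rw [ha, Finset.mem_singleton] at this
      exact hx this
    have hne3 : ∀ k : Fin 3, k + 1 ≠ k := by decide
    have hne2 : ∀ k : Fin 2, k + 1 ≠ k := by decide
    rcases a with ⟨i, j⟩ | ⟨i, j⟩
    · have hx : (Sum.inl (i, j + 1) : S33S22) ∈ T :=
        hmem _ (by simp [hne3 j])
      have hy : (Sum.inl (i + 1, j) : S33S22) ∈ T :=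
        hmem _ (by simp [hne3 i])
      exact hamem (hclosed _ hx _ hy)
    · have hx : (Sum.inr (i, j + 1) : S33S22) ∈ T :=
        hmem _ (by simp [hne2 j])
      have hy : (Sum.inr (i + 1, j) : S33S22) ∈ T :=
        hmem _ (by simp [hne2 i])
      exact hamem (hclosed _ hx _ hy)
end
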